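/- arXiv:1912.00259 — 9 statements merged into one kernel-verified Lean document; each statement's English description precedes it below -/
import Mathlib

section
/- Let n ≥ 1, let u : ℝⁿ → ℝ be a C² function, and let x ∈ ℝⁿ. Then the AMV Laplacian of u at x with respect to the Euclidean distance and the Lebesgue measure exists and equals Δu(x)/(2(n+2)), i.e. lim_{r→0⁺} (1/r²) ⨍_{B_r(x)} (u(y) − u(x)) dy = (1/(2(n+2))) Σ_{k=1}^n ∂_{kk} u(x). -/
open MeasureTheory Metric Filter Topology Real
open scoped ENNReal RealInnerProductSpace

/-!
Taylor's formula gives `u (x + h) = u x + Du(x) h + ½ D²u(x)(h, h) + o(‖h‖²)`. Averaged over the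
ball `B_r(0)`, the linear term vanishes by the symmetry `h ↦ -h`. Sign flips and permutations of
coordinates are isometries preserving the ball, so `⨍ hᵢ hⱼ = δᵢⱼ ⨍ ‖h‖² / n`, and polar
coordinates give `⨍_{B_r} ‖h‖² = n r² / (n + 2)`. Hence the quadratic term averages to
`r² Δu(x) / (2(n + 2))`, while the remainder averages to `o(r²)`.
-/

section Taylor

variable {V F : Type*} [NormedAddCommGroup V] [NormedSpace ℝ V] [NormedAddCommGroup F]
  [NormedSpace ℝ F] {u : V → F}

noncomputable def secondTaylorRemainder (u : V → F) (x h : V) : F :=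
  u (x + h) - u x - fderiv ℝ u x h - (1 / 2 : ℝ) • fderiv ℝ (fderiv ℝ u) x h h

theorem ContDiff.hasFDerivAt_secondTaylorRemainder (hu : ContDiff ℝ 2 u) (x h : V) :
    HasFDerivAt (secondTaylorRemainder u x)
      (fderiv ℝ u (x + h) - fderiv ℝ u x - fderiv ℝ (fderiv ℝ u) x h) h := by
  set B := fderiv ℝ (fderiv ℝ u) x
  have hsymm : IsSymmSndFDerivAt ℝ u x := hu.contDiffAt.isSymmSndFDerivAt (by simp)
  have hu' : HasFDerivAt (fun h => u (x + h)) (fderiv ℝ u (x + h)) h :=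
    (hasFDerivAt_comp_add_left x).2 (hu.differentiable two_ne_zero (x + h)).hasFDerivAt
  have hB : HasFDerivAt (fun h => B h h) (B h + B.flip h) h := by
    simpa using B.hasFDerivAt.clm_apply (hasFDerivAt_id h)
  convert ((hu'.sub_const (u x)).sub (fderiv ℝ u x).hasFDerivAt).sub
    (hB.const_smul (1 / 2 : ℝ)) using 1
  · rfl
  ext v
  have : B v h = B h v := hsymm v h
  simp only [sub_apply, add_apply, smul_apply, ContinuousLinearMap.flip_apply, this]
  module

theorem ContDiff.continuous_secondTaylorRemainder (hu : ContDiff ℝ 2 u) (x : V) :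
    Continuous (secondTaylorRemainder u x) :=
  continuous_iff_continuousAt.2 fun h => (hu.hasFDerivAt_secondTaylorRemainder x h).continuousAt

theorem ContDiff.secondTaylorRemainder_isLittleO (hu : ContDiff ℝ 2 u) (x : V) :
    secondTaylorRemainder u x =o[𝓝 0] fun h => ‖h‖ ^ 2 := by
  have hB : (fun h => fderiv ℝ u (x + h) - fderiv ℝ u x - fderiv ℝ (fderiv ℝ u) x h)
      =o[𝓝 0] fun h => ‖h‖ ^ 1 := by
    simpa using (hasFDerivAt_iff_isLittleO_nhds_zero.1
      ((hu.fderiv_right (m := 1) le_rfl).differentiable one_ne_zero x).hasFDerivAt).norm_right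
  have := convex_univ.isLittleO_pow_succ (n := 1) (Set.mem_univ (0 : V))
    (fun h _ => (hu.hasFDerivAt_secondTaylorRemainder x h).hasFDerivWithinAt)
    (by simpa [nhdsWithin_univ] using hB)
  have h0 : secondTaylorRemainder u x 0 = 0 := by simp [secondTaylorRemainder]
  simpa [h0] using this

end Taylor

theorem norm_setAverage_le_of_norm_le_const {α F : Type*} [MeasurableSpace α]
    [NormedAddCommGroup F] [NormedSpace ℝ F] {μ : Measure α} {s : Set α} (hs : μ s ≠ ∞)
    {f : α → F} {C : ℝ} (hC : 0 ≤ C) (hf : ∀ y ∈ s, ‖f y‖ ≤ C) : ‖⨍ y in s, f y ∂μ‖ ≤ C := by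
  rw [setAverage_eq, norm_smul, norm_inv, Real.norm_of_nonneg measureReal_nonneg]
  rcases (measureReal_nonneg (μ := μ) (s := s)).eq_or_lt with h0 | hpos
  · simp [← h0, hC]
  calc (μ.real s)⁻¹ * ‖∫ y in s, f y ∂μ‖ ≤ (μ.real s)⁻¹ * (C * μ.real s) := by
        gcongr; exact norm_setIntegral_le_of_norm_le_const hs.lt_top hf
    _ = C := by field_simp

section BallAverage

variable {V F : Type*} [NormedAddCommGroup V] [MeasurableSpace V] [NormedAddCommGroup F]
  [NormedSpace ℝ F] {μ : Measure V}

theorem setAverage_ball_eq_setAverage_ball_zero_comp_add [BorelSpace V] [μ.IsAddLeftInvariant]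
    (f : V → F) (x : V) (r : ℝ) :
    ⨍ y in ball x r, f y ∂μ = ⨍ h in ball 0 r, f (x + h) ∂μ := by
  have hpre : (x + ·) ⁻¹' ball x r = ball (0 : V) r := by simp [preimage_add_ball]
  have hmp := measurePreserving_add_left μ x
  have hemb := (Homeomorph.addLeft x).measurableEmbedding
  rw [setAverage_eq, setAverage_eq, ← hpre, hmp.setIntegral_preimage_emb hemb,
    measureReal_def, measureReal_def, hmp.measure_preimage_emb hemb]

theorem tendsto_inv_sq_smul_setAverage_ball_of_isLittleO [ProperSpace V]
    [IsFiniteMeasureOnCompacts μ] {g : V → F} (hg : g =o[𝓝 0] fun h => ‖h‖ ^ 2) :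
    Tendsto (fun r : ℝ => (r ^ 2)⁻¹ • ⨍ h in ball 0 r, g h ∂μ) (𝓝[>] 0) (𝓝 0) := by
  refine Asymptotics.IsLittleO.tendsto_inv_smul_nhds_zero ?_
  refine Asymptotics.isLittleO_iff.2 fun c hc => ?_
  obtain ⟨δ, hδ, hgδ⟩ := Metric.eventually_nhds_iff_ball.1 (Asymptotics.isLittleO_iff.1 hg hc)
  filter_upwards [Ioo_mem_nhdsGT hδ] with r ⟨hr0, hrδ⟩
  rw [Real.norm_of_nonneg (by positivity)]
  refine norm_setAverage_le_of_norm_le_const measure_ball_lt_top.ne (by positivity)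
    fun h hh => ?_
  have hh' : ‖h‖ < r := mem_ball_zero_iff.1 hh
  calc ‖g h‖ ≤ c * ‖‖h‖ ^ 2‖ := hgδ h (ball_subset_ball hrδ.le hh)
    _ ≤ c * r ^ 2 := by rw [norm_pow, norm_norm]; gcongr

end BallAverage

section IsometryInvariance

variable {V F : Type*} [NormedAddCommGroup V] [InnerProductSpace ℝ V] [FiniteDimensional ℝ V]
  [MeasurableSpace V] [BorelSpace V] [NormedAddCommGroup F] [NormedSpace ℝ F]

theorem setIntegral_ball_comp_linearIsometryEquiv (e : V ≃ₗᵢ[ℝ] V) (f : V → F) (r : ℝ) :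
    ∫ h in ball 0 r, f (e h) = ∫ h in ball 0 r, f h := by
  have hpre : e ⁻¹' ball 0 r = ball 0 r := by ext h; simp
  simpa only [hpre] using
    e.measurePreserving.setIntegral_preimage_emb e.toHomeomorph.measurableEmbedding f (ball 0 r)

theorem setIntegral_ball_eq_zero_of_comp_eq_neg (e : V ≃ₗᵢ[ℝ] V) {f : V → F}
    (hf : ∀ h, f (e h) = -f h) (r : ℝ) : ∫ h in ball 0 r, f h = 0 := by
  have := setIntegral_ball_comp_linearIsometryEquiv e f r
  simp only [hf, integral_neg] at this
  linear_combination (norm := module) (-(1 / 2) : ℝ) • this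

end IsometryInvariance

theorem Continuous.integrableOn_ball {V F : Type*} [MetricSpace V] [ProperSpace V]
    [MeasurableSpace V] [OpensMeasurableSpace V] [NormedAddCommGroup F] {μ : Measure V}
    [IsFiniteMeasureOnCompacts μ] {f : V → F} (hf : Continuous f) (x : V) (r : ℝ) :
    IntegrableOn f (ball x r) μ :=
  (hf.continuousOn.integrableOn_compact (isCompact_closedBall x r)).mono_set ball_subset_closedBall

theorem setIntegral_ball_norm_sq {V : Type*} [NormedAddCommGroup V] [NormedSpace ℝ V]
    [FiniteDimensional ℝ V] [Nontrivial V] [MeasurableSpace V] [BorelSpace V]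
    (μ : Measure V) [μ.IsAddHaarMeasure] {r : ℝ} (hr : 0 < r) :
    ∫ h in ball 0 r, ‖h‖ ^ 2 ∂μ
      = Module.finrank ℝ V / (Module.finrank ℝ V + 2) * r ^ 2 * μ.real (ball 0 r) := by
  set d := Module.finrank ℝ V
  have hd : 1 ≤ d := Module.finrank_pos
  have hradial : ∫ h in ball 0 r, ‖h‖ ^ 2 ∂μ = ∫ h, (Set.Iio r).indicator (· ^ 2) ‖h‖ ∂μ := by
    rw [← integral_indicator measurableSet_ball]
    congr 1 with h
    by_cases hh : ‖h‖ < r <;> simp [Set.indicator, hh]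
  have hpolar : ∫ t in Set.Ioi (0 : ℝ), t ^ (d - 1) • (Set.Iio r).indicator (· ^ 2) t
      = r ^ (d + 2) / (d + 2) := by
    have hint : (fun t : ℝ => t ^ (d - 1) • (Set.Iio r).indicator (· ^ 2) t)
        = (Set.Iio r).indicator (· ^ (d + 1)) := by
      ext t
      by_cases ht : t < r
      · simp only [Set.indicator_of_mem (Set.mem_Iio.2 ht), smul_eq_mul, ← pow_add]
        congr 1
        omega
      · simp [ht]
    rw [hint, integral_indicator measurableSet_Iio, Measure.restrict_restrict measurableSet_Iio,
      Set.Iio_inter_Ioi, ← integral_Ioc_eq_integral_Ioo, ← intervalIntegral.integral_of_le hr.le,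
      integral_pow]
    push_cast
    ring
  have hball : μ.real (ball 0 r) = r ^ d * μ.real (ball 0 1) := by
    rw [measureReal_def, Measure.addHaar_ball_of_pos μ 0 hr, ENNReal.toReal_mul,
      ENNReal.toReal_ofReal (by positivity), measureReal_def]
  rw [hradial, integral_fun_norm_addHaar μ, hpolar, hball, nsmul_eq_mul, smul_eq_mul]
  field_simp
  ring

namespace EuclideanSpace

variable {ι : Type*} [Fintype ι]

theorem setIntegral_ball_coord_mul_coord_of_ne {i j : ι} (hij : i ≠ j) (r : ℝ) :
    ∫ h in ball (0 : EuclideanSpace ℝ ι) r, h i * h j = 0 := by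
  classical
  let e := LinearIsometryEquiv.piLpCongrRight 2 fun k : ι =>
    if k = j then LinearIsometryEquiv.neg ℝ else LinearIsometryEquiv.refl ℝ ℝ
  refine setIntegral_ball_eq_zero_of_comp_eq_neg e (fun h => ?_) r
  simp [e, hij]

theorem setIntegral_ball_coord_sq_eq (i j : ι) (r : ℝ) :
    ∫ h in ball (0 : EuclideanSpace ℝ ι) r, h i ^ 2
      = ∫ h in ball (0 : EuclideanSpace ℝ ι) r, h j ^ 2 := by
  classical
  rw [← setIntegral_ball_comp_linearIsometryEquiv
    (LinearIsometryEquiv.piLpCongrLeft 2 ℝ ℝ (Equiv.swap i j))]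
  simp [Equiv.piCongrLeft']

theorem setIntegral_ball_coord_sq {r : ℝ} (hr : 0 < r) (i : ι) :
    ∫ h in ball (0 : EuclideanSpace ℝ ι) r, h i ^ 2
      = r ^ 2 / (Fintype.card ι + 2) * volume.real (ball (0 : EuclideanSpace ℝ ι) r) := by
  have : Nonempty ι := ⟨i⟩
  have hsum : ∑ j, ∫ h in ball (0 : EuclideanSpace ℝ ι) r, h j ^ 2
      = ∫ h in ball (0 : EuclideanSpace ℝ ι) r, ‖h‖ ^ 2 := by
    rw [← integral_finsetSum _ fun j _ =>
      (by fun_prop : Continuous fun h : EuclideanSpace ℝ ι => h j ^ 2).integrableOn_ball _ _]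
    simp [real_norm_sq_eq]
  simp only [setIntegral_ball_coord_sq_eq _ i, Finset.sum_const, Finset.card_univ, nsmul_eq_mul,
    setIntegral_ball_norm_sq volume hr, finrank_euclideanSpace] at hsum
  have hcard : (Fintype.card ι : ℝ) ≠ 0 := by positivity
  field_simp at hsum ⊢
  linear_combination hsum

variable [DecidableEq ι]

theorem setIntegral_ball_coord_mul_coord {r : ℝ} (hr : 0 < r) (i j : ι) :
    ∫ h in ball (0 : EuclideanSpace ℝ ι) r, h i * h j
      = if i = j then r ^ 2 / (Fintype.card ι + 2) * volume.real (ball (0 : EuclideanSpace ℝ ι) r)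
        else 0 := by
  split_ifs with hij
  · subst hij
    simpa [sq] using setIntegral_ball_coord_sq hr i
  · exact setIntegral_ball_coord_mul_coord_of_ne hij r

theorem setIntegral_ball_apply_apply (B : EuclideanSpace ℝ ι →L[ℝ] EuclideanSpace ℝ ι →L[ℝ] ℝ)
    {r : ℝ} (hr : 0 < r) :
    ∫ h in ball (0 : EuclideanSpace ℝ ι) r, B h h
      = r ^ 2 / (Fintype.card ι + 2) * volume.real (ball (0 : EuclideanSpace ℝ ι) r)
        * ∑ i, B (single i 1) (single i 1) := by
  classical
  have hexpand : ∀ h : EuclideanSpace ℝ ι,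
      B h h = ∑ i, ∑ j, h i * h j * B (single i 1) (single j 1) := by
    intro h
    conv_lhs => rw [← (basisFun ι ℝ).sum_repr h]
    simp only [map_sum, map_smul, FunLike.coe_sum, Finset.sum_apply, FunLike.coe_smul,
      Pi.smul_apply, smul_eq_mul, basisFun_repr, basisFun_apply]
    rw [Finset.sum_comm]
    simp_rw [Finset.mul_sum]
    refine Finset.sum_congr rfl fun i _ => Finset.sum_congr rfl fun j _ => by ring
  have hint : ∀ i j, IntegrableOn
      (fun h : EuclideanSpace ℝ ι => h i * h j * B (single i 1) (single j 1)) (ball 0 r) :=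
    fun i j => (by fun_prop : Continuous _).integrableOn_ball _ _
  rw [setIntegral_congr_fun measurableSet_ball fun h _ => hexpand h,
    integral_finsetSum _ fun i _ => integrable_finsetSum _ fun j _ => hint i j]
  simp_rw [integral_finsetSum _ fun j _ => hint _ j, integral_mul_const,
    setIntegral_ball_coord_mul_coord hr, ite_mul, zero_mul, Finset.sum_ite_eq, Finset.mem_univ,
    if_true, Finset.mul_sum]

end EuclideanSpace

open EuclideanSpace in
theorem ContDiff.setAverage_ball_sub_eq {ι : Type*} [Fintype ι] [DecidableEq ι]
    {u : EuclideanSpace ℝ ι → ℝ} (hu : ContDiff ℝ 2 u) (x : EuclideanSpace ℝ ι) {r : ℝ}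
    (hr : 0 < r) :
    ⨍ y in ball x r, (u y - u x)
      = r ^ 2 / (2 * (Fintype.card ι + 2))
          * ∑ i, fderiv ℝ (fderiv ℝ u) x (single i 1) (single i 1)
        + ⨍ h in ball 0 r, secondTaylorRemainder u x h := by
  set B := fderiv ℝ (fderiv ℝ u) x
  have hsplit : ∀ h, u (x + h) - u x
      = fderiv ℝ u x h + ((1 / 2) * B h h + secondTaylorRemainder u x h) := by
    intro h
    simp only [secondTaylorRemainder, smul_eq_mul, B]
    ring
  have hB : Continuous fun h => (1 / 2) * B h h := by fun_prop
  have hR := hu.continuous_secondTaylorRemainder x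
  have hBR : Continuous fun h => (1 / 2) * B h h + secondTaylorRemainder u x h := by fun_prop
  have hvol : volume.real (ball (0 : EuclideanSpace ℝ ι) r) ≠ 0 :=
    (ENNReal.toReal_pos (measure_ball_pos volume 0 hr).ne' measure_ball_lt_top.ne).ne'
  rw [setAverage_ball_eq_setAverage_ball_zero_comp_add, setAverage_eq, setAverage_eq,
    setIntegral_congr_fun measurableSet_ball fun h _ => hsplit h,
    integral_add ((fderiv ℝ u x).continuous.integrableOn_ball _ _) (hBR.integrableOn_ball _ _),
    integral_add (hB.integrableOn_ball _ _) (hR.integrableOn_ball _ _),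
    setIntegral_ball_eq_zero_of_comp_eq_neg (LinearIsometryEquiv.neg ℝ) (fun h => map_neg _ h),
    integral_const_mul, setIntegral_ball_apply_apply B hr, smul_eq_mul, smul_eq_mul]
  field_simp
  ring

open EuclideanSpace in
theorem amv_laplacian_eq_euclidean_laplacian_general
    (n : ℕ) (u : EuclideanSpace ℝ (Fin n) → ℝ)
    (hu : ContDiff ℝ 2 u) (x : EuclideanSpace ℝ (Fin n)) :
    Filter.Tendsto
      (fun r : ℝ => (1 / r ^ 2) * ⨍ y in Metric.ball x r, (u y - u x) ∂volume)
      (𝓝[>] (0 : ℝ))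
      (𝓝 ((1 / (2 * ((n : ℝ) + 2))) *
        ∑ k : Fin n, fderiv ℝ (fun z => fderiv ℝ u z (EuclideanSpace.single k 1)) x
          (EuclideanSpace.single k 1))) := by
  have hsecond : ∀ v w, fderiv ℝ (fun z => fderiv ℝ u z v) x w = fderiv ℝ (fderiv ℝ u) x w v :=
    fun v w => by
      rw [fderiv_clm_apply ((hu.fderiv_right (m := 1) le_rfl).differentiable one_ne_zero x)
        (differentiableAt_const v)]
      simp
  have hrem := tendsto_inv_sq_smul_setAverage_ball_of_isLittleO (μ := volume)
    (hu.secondTaylorRemainder_isLittleO x)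
  have hlim := (tendsto_const_nhds (x := (1 / (2 * ((n : ℝ) + 2))) *
    ∑ k : Fin n, fderiv ℝ (fderiv ℝ u) x (single k 1) (single k 1))).add hrem
  rw [add_zero] at hlim
  simp only [hsecond]
  refine hlim.congr' (eventually_nhdsWithin_of_forall fun r (hr : 0 < r) => ?_)
  beta_reduce
  rw [hu.setAverage_ball_sub_eq x hr, Fintype.card_fin, smul_eq_mul]
  field_simp

/-- For a `C²` function `u : ℝⁿ → ℝ` (n ≥ 1) and any point `x`, the AMV
Laplacian of `u` at `x` w.r.t. the Euclidean distance and Lebesgue measure exists and equals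
`Δu(x) / (2(n+2))`. -/
theorem amv_laplacian_eq_euclidean_laplacian
    (n : ℕ) (hn : 1 ≤ n) (u : EuclideanSpace ℝ (Fin n) → ℝ)
    (hu : ContDiff ℝ 2 u) (x : EuclideanSpace ℝ (Fin n)) :
    Filter.Tendsto
      (fun r : ℝ => (1 / r ^ 2) * ⨍ y in Metric.ball x r, (u y - u x) ∂volume)
      (𝓝[>] (0 : ℝ))
      (𝓝 ((1 / (2 * ((n : ℝ) + 2))) *
        ∑ k : Fin n, fderiv ℝ (fun z => fderiv ℝ u z (EuclideanSpace.single k 1)) x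
          (EuclideanSpace.single k 1))) :=
  amv_laplacian_eq_euclidean_laplacian_general n u hu x
end

section
/- In ℝ², let w(x,y) := (x+y)², u(x,y) := x² − 3xy + y², and μ := w·L². Then for every (x,y) ∈ ℝ² and every r > 0, the μ-average of u on the Euclidean ball B_r(x,y) equals u(x,y) + r⁴/(6(r² + 2(x+y)²)); equivalently, Δ_{μ,r} u(x,y) = r²/(6(r² + 2(x+y)²)). In particular w Δu + 2∇w·∇u = 0 everywhere but u does not satisfy the mean value property with respect to μ at any point. -/
open MeasureTheory Metric Filter Topology Real
open scoped ENNReal RealInnerProductSpace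

/-!
Translated to the origin and written in polar coordinates, the `μ`-integrals of `1` and of
`u - u(p)` over `B_r(p)` become Lebesgue integrals of quartic polynomials over a disc, in which
only the even moments `∫ cos^i θ sin^j θ dθ` survive. This gives
`μ(B_r(p)) = π r² (r² + 2(x+y)²) / 2` and `∫_{B_r(p)} (u - u(p)) dμ = π r⁶ / 12`. The `r⁴` terms
of the latter cancel because `∂ₓu + ∂ᵧu = -(x+y)`, the same relation that gives
`w Δu + 2 ∇w·∇u = 0`; the `r⁶` term, coming from the fourth moments, survives.
-/

open Set

local notation "ℝ²" => EuclideanSpace ℝ (Fin 2)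

-- Phrased with `Integrable` on `volume.restrict` rather than `IntegrableOn`, so that `apply` can
-- discharge the integrability side goals of `integral_add` inside `simp`.
theorem Continuous.integrable_restrict_ball {X : Type*} [MetricSpace X] [ProperSpace X]
    [MeasureSpace X] [OpensMeasurableSpace X] [IsFiniteMeasureOnCompacts (volume : Measure X)]
    {f : X → ℝ} (hf : Continuous f) (x : X) (r : ℝ) :
    Integrable f (volume.restrict (ball x r)) :=
  (hf.continuousOn.integrableOn_compact (isCompact_closedBall x r)).mono_set ball_subset_closedBall

theorem setIntegral_ball_eq_setIntegral_ball_zero {G : Type*} [NormedAddCommGroup G]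
    [MeasurableSpace G] [BorelSpace G] (μ : Measure G) [μ.IsAddLeftInvariant] (p : G) (r : ℝ)
    (f : G → ℝ) : ∫ y in ball p r, f y ∂μ = ∫ z in ball 0 r, f (p + z) ∂μ := by
  rw [← (measurePreserving_add_left μ p).setIntegral_preimage_emb
    (measurableEmbedding_addLeft p) f, preimage_add_left_ball, neg_add_cancel]

theorem LinearIsometryEquiv.setIntegral_ball_zero_comp {E F : Type*}
    [NormedAddCommGroup E] [InnerProductSpace ℝ E] [FiniteDimensional ℝ E]
    [MeasurableSpace E] [BorelSpace E]
    [NormedAddCommGroup F] [InnerProductSpace ℝ F] [FiniteDimensional ℝ F]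
    [MeasurableSpace F] [BorelSpace F] (e : E ≃ₗᵢ[ℝ] F) (r : ℝ) (g : F → ℝ) :
    ∫ x in ball 0 r, g (e x) = ∫ y in ball 0 r, g y := by
  rw [← e.measurePreserving.setIntegral_preimage_emb e.toHomeomorph.measurableEmbedding g,
    e.preimage_ball, map_zero]

section WithDensity

variable {X : Type*} [MeasurableSpace X] {μ : Measure X} {w : X → ℝ} {s : Set X}

theorem setIntegral_withDensity_ofReal (hw : Measurable w) (hw₀ : ∀ x, 0 ≤ w x)
    (hs : MeasurableSet s) (f : X → ℝ) :
    ∫ x in s, f x ∂μ.withDensity (fun x => ENNReal.ofReal (w x)) = ∫ x in s, w x * f x ∂μ := by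
  rw [setIntegral_withDensity_eq_setIntegral_toReal_smul hw.ennreal_ofReal
    (ae_of_all _ fun _ => ENNReal.ofReal_lt_top) f hs]
  simp only [ENNReal.toReal_ofReal (hw₀ _), smul_eq_mul]

theorem setAverage_withDensity_ofReal (hw : Measurable w) (hw₀ : ∀ x, 0 ≤ w x)
    (hs : MeasurableSet s) (f : X → ℝ) :
    ⨍ x in s, f x ∂μ.withDensity (fun x => ENNReal.ofReal (w x)) =
      (∫ x in s, w x * f x ∂μ) / ∫ x in s, w x ∂μ := by
  have hmass : (μ.withDensity fun x => ENNReal.ofReal (w x)).real s = ∫ x in s, w x ∂μ := by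
    simpa using setIntegral_withDensity_ofReal (μ := μ) hw hw₀ hs fun _ => 1
  rw [setAverage_eq, hmass, setIntegral_withDensity_ofReal hw hw₀ hs, smul_eq_mul, div_eq_inv_mul]

end WithDensity

theorem setIntegral_Ioo_eq_intervalIntegral {f : ℝ → ℝ} {a b : ℝ} (hab : a ≤ b) :
    ∫ x in Ioo a b, f x = ∫ x in a..b, f x := by
  rw [intervalIntegral.integral_of_le hab, integral_Ioc_eq_integral_Ioo]

theorem setIntegral_ball_zero_eq_polar {g : ℂ → ℝ} (hg : Continuous g) (r : ℝ) :
    ∫ z in ball (0 : ℂ) r, g z =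
      ∫ ρ in Ioo 0 r, ∫ θ in Ioo (-π) π, ρ * g (ρ * (cos θ + sin θ * Complex.I)) := by
  have hsub : Ioo 0 r ×ˢ Ioo (-π) π ⊆ polarCoord.target := prod_mono Ioo_subset_Ioi_self subset_rfl
  have hint : IntegrableOn (fun q : ℝ × ℝ => q.1 * g (q.1 * (cos q.2 + sin q.2 * Complex.I)))
      (Ioo 0 r ×ˢ Ioo (-π) π) :=
    ((Continuous.continuousOn (by fun_prop)).integrableOn_compact
      (isCompact_Icc.prod isCompact_Icc)).mono_set
      (prod_mono Ioo_subset_Icc_self Ioo_subset_Icc_self)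
  rw [← setIntegral_prod _ hint, ← Measure.volume_eq_prod, ← integral_indicator measurableSet_ball,
    ← Complex.integral_comp_polarCoord_symm, ← inter_eq_self_of_subset_right hsub,
    ← setIntegral_indicator (measurableSet_Ioo.prod measurableSet_Ioo)]
  refine setIntegral_congr_fun polarCoord.open_target.measurableSet fun q hq => ?_
  have hρ : 0 < q.1 := hq.1
  have hball : Complex.polarCoord.symm q ∈ ball 0 r ↔ q ∈ Ioo 0 r ×ˢ Ioo (-π) π := by
    simp [mem_prod, abs_of_pos hρ, hρ, hq.2]
  by_cases hqR : q ∈ Ioo 0 r ×ˢ Ioo (-π) π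
  · rw [indicator_of_mem hqR, indicator_of_mem (hball.2 hqR), Complex.polarCoord_symm_apply]
    simp
  · rw [indicator_of_notMem hqR, indicator_of_notMem (mt hball.1 hqR), smul_zero]

theorem setIntegral_ball_zero_re_pow_mul_im_pow {r : ℝ} (hr : 0 ≤ r) (i j : ℕ) :
    ∫ z in ball (0 : ℂ) r, z.re ^ i * z.im ^ j =
      r ^ (i + j + 2) / (i + j + 2) * ∫ θ in -π..π, cos θ ^ i * sin θ ^ j := by
  calc ∫ z in ball (0 : ℂ) r, z.re ^ i * z.im ^ j
      = ∫ ρ in 0..r, ρ ^ (i + j + 1) * ∫ θ in -π..π, cos θ ^ i * sin θ ^ j := by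
        rw [setIntegral_ball_zero_eq_polar (by fun_prop), setIntegral_Ioo_eq_intervalIntegral hr]
        congr 1 with ρ
        rw [setIntegral_Ioo_eq_intervalIntegral (neg_le_self pi_pos.le),
          ← intervalIntegral.integral_const_mul]
        congr 1 with θ
        simp [Complex.cos_ofReal_re, Complex.sin_ofReal_re]
        ring
    _ = r ^ (i + j + 2) / (i + j + 2) * ∫ θ in -π..π, cos θ ^ i * sin θ ^ j := by
        rw [intervalIntegral.integral_mul_const, integral_pow]
        push_cast
        ring

theorem integral_cos_pow_mul_sin_pow_of_odd_left {i : ℕ} (hi : Odd i) (j : ℕ) :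
    ∫ θ in -π..π, cos θ ^ i * sin θ ^ j = 0 := by
  obtain ⟨n, rfl⟩ := hi
  simp_rw [mul_comm (cos _ ^ _), integral_sin_pow_mul_cos_pow_odd, sin_neg, sin_pi, neg_zero,
    intervalIntegral.integral_same]

theorem integral_cos_pow_mul_sin_pow_of_odd_right (i : ℕ) {j : ℕ} (hj : Odd j) :
    ∫ θ in -π..π, cos θ ^ i * sin θ ^ j = 0 := by
  obtain ⟨n, rfl⟩ := hj
  simp_rw [mul_comm (cos _ ^ _), integral_sin_pow_odd_mul_cos_pow, cos_neg,
    intervalIntegral.integral_same]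

theorem integral_cos_sq_mul_sin_sq : ∫ θ in -π..π, cos θ ^ 2 * sin θ ^ 2 = π / 4 := by
  have h : sin (4 * π) = 0 := by exact_mod_cast sin_nat_mul_pi 4
  simp [mul_comm (cos _ ^ 2), integral_sin_sq_mul_cos_sq, h]
  ring

/-- For the integrand `P` this is `π r² (P(0) + r² ΔP(0) / 8 + r⁴ Δ²P(0) / 192)`. -/
theorem setIntegral_ball_zero_quartic {r : ℝ} (hr : 0 ≤ r)
    (a₀₀ a₁₀ a₀₁ a₂₀ a₁₁ a₀₂ a₃₀ a₂₁ a₁₂ a₀₃ a₄₀ a₃₁ a₂₂ a₁₃ a₀₄ : ℝ) :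
    ∫ z in ball (0 : ℂ) r, (a₀₀ * (z.re ^ 0 * z.im ^ 0)
      + a₁₀ * (z.re ^ 1 * z.im ^ 0) + a₀₁ * (z.re ^ 0 * z.im ^ 1)
      + a₂₀ * (z.re ^ 2 * z.im ^ 0) + a₁₁ * (z.re ^ 1 * z.im ^ 1) + a₀₂ * (z.re ^ 0 * z.im ^ 2)
      + a₃₀ * (z.re ^ 3 * z.im ^ 0) + a₂₁ * (z.re ^ 2 * z.im ^ 1) + a₁₂ * (z.re ^ 1 * z.im ^ 2)
      + a₀₃ * (z.re ^ 0 * z.im ^ 3) + a₄₀ * (z.re ^ 4 * z.im ^ 0) + a₃₁ * (z.re ^ 3 * z.im ^ 1)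
      + a₂₂ * (z.re ^ 2 * z.im ^ 2) + a₁₃ * (z.re ^ 1 * z.im ^ 3) + a₀₄ * (z.re ^ 0 * z.im ^ 4)) =
      π * r ^ 2 * a₀₀ + π * r ^ 4 / 4 * (a₂₀ + a₀₂) + π * r ^ 6 / 8 * (a₄₀ + a₀₄)
        + π * r ^ 6 / 24 * a₂₂ := by
  simp (disch := (apply Continuous.integrable_restrict_ball; fun_prop)) only [integral_add,
    integral_const_mul, setIntegral_ball_zero_re_pow_mul_im_pow hr]
  simp (disch := decide) only [integral_cos_pow_mul_sin_pow_of_odd_left,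
    integral_cos_pow_mul_sin_pow_of_odd_right]
  norm_num [integral_cos_pow, integral_sin_pow, integral_cos_sq_mul_sin_sq]
  ring

theorem EuclideanSpace.setIntegral_ball_eq_setIntegral_ball_complex (p : ℝ²) (r : ℝ)
    (f : ℝ² → ℝ) :
    ∫ y in ball p r, f y = ∫ z in ball (0 : ℂ) r, f (p + Complex.orthonormalBasisOneI.repr z) := by
  rw [setIntegral_ball_eq_setIntegral_ball_zero,
    Complex.orthonormalBasisOneI.repr.setIntegral_ball_zero_comp r (fun y => f (p + y))]

theorem EuclideanSpace.fderiv_apply_apply {ι : Type*} [Fintype ι] (z v : EuclideanSpace ℝ ι)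
    (i : ι) : fderiv ℝ (fun y : EuclideanSpace ℝ ι => y i) z v = v i := by
  rw [(PiLp.hasFDerivAt_apply 2 z i).fderiv]
  rfl

theorem EuclideanSpace.gradient_apply {ι : Type*} [Fintype ι] [DecidableEq ι]
    (f : EuclideanSpace ℝ ι → ℝ) (p : EuclideanSpace ℝ ι) (i : ι) :
    gradient f p i = fderiv ℝ f p (EuclideanSpace.single i 1) := by
  rw [← inner_gradient_left, real_inner_comm, EuclideanSpace.inner_single_left]
  simp

theorem EuclideanSpace.inner_gradient_gradient {ι : Type*} [Fintype ι] [DecidableEq ι]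
    (f g : EuclideanSpace ℝ ι → ℝ) (p : EuclideanSpace ℝ ι) :
    ⟪gradient f p, gradient g p⟫ =
      ∑ k, fderiv ℝ f p (EuclideanSpace.single k 1) * fderiv ℝ g p (EuclideanSpace.single k 1) := by
  simp only [PiLp.inner_apply, EuclideanSpace.gradient_apply, RCLike.inner_apply, conj_trivial,
    mul_comm]

namespace BoseExample

noncomputable def w (p : ℝ²) : ℝ := (p 0 + p 1) ^ 2

noncomputable def u (p : ℝ²) : ℝ := p 0 ^ 2 - 3 * p 0 * p 1 + p 1 ^ 2

noncomputable def μ : Measure ℝ² := volume.withDensity fun p => ENNReal.ofReal (w p)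

theorem setIntegral_ball_w (p : ℝ²) {r : ℝ} (hr : 0 ≤ r) :
    ∫ y in ball p r, w y = π * r ^ 2 * (r ^ 2 + 2 * (p 0 + p 1) ^ 2) / 2 := by
  rw [EuclideanSpace.setIntegral_ball_eq_setIntegral_ball_complex]
  convert setIntegral_ball_zero_quartic hr ((p 0 + p 1) ^ 2) (2 * (p 0 + p 1)) (2 * (p 0 + p 1))
    1 2 1 0 0 0 0 0 0 0 0 0 using 3 with z
  · simp [w]
    ring
  · ring

theorem setIntegral_ball_w_mul_u_sub (p : ℝ²) {r : ℝ} (hr : 0 ≤ r) :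
    ∫ y in ball p r, w y * (u y - u p) = π * r ^ 6 / 12 := by
  rw [EuclideanSpace.setIntegral_ball_eq_setIntegral_ball_complex]
  set a := p 0 + p 1
  set α := 2 * p 0 - 3 * p 1
  set β := 2 * p 1 - 3 * p 0
  convert setIntegral_ball_zero_quartic hr 0 (a ^ 2 * α) (a ^ 2 * β)
    (a ^ 2 + 2 * a * α) (2 * a * (α + β) - 3 * a ^ 2) (a ^ 2 + 2 * a * β)
    (α + 2 * a) (2 * α + β - 4 * a) (α + 2 * β - 4 * a) (β + 2 * a)
    1 (-1) (-4) (-1) 1 using 3 with z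
  · simp [w, u, a, α, β]
    ring
  · have hαβ : α + β = -a := by ring
    linear_combination (π * r ^ 4 / 2 * a) * hαβ

theorem setAverage_eq_div (p : ℝ²) (r : ℝ) (f : ℝ² → ℝ) :
    ⨍ y in ball p r, f y ∂μ = (∫ y in ball p r, w y * f y) / ∫ y in ball p r, w y :=
  setAverage_withDensity_ofReal (by fun_prop) (fun _ => sq_nonneg _)
    measurableSet_ball f

theorem setAverage_u_sub (p : ℝ²) {r : ℝ} (hr : 0 < r) :
    ⨍ y in ball p r, (u y - u p) ∂μ = r ^ 4 / (6 * (r ^ 2 + 2 * (p 0 + p 1) ^ 2)) := by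
  rw [setAverage_eq_div, setIntegral_ball_w_mul_u_sub p hr.le, setIntegral_ball_w p hr.le]
  field_simp
  ring

theorem setAverage_u (p : ℝ²) {r : ℝ} (hr : 0 < r) :
    ⨍ y in ball p r, u y ∂μ = u p + r ^ 4 / (6 * (r ^ 2 + 2 * (p 0 + p 1) ^ 2)) := by
  have hsplit : ∫ y in ball p r, w y * u y =
      (∫ y in ball p r, w y * (u y - u p)) + u p * ∫ y in ball p r, w y := by
    rw [← integral_const_mul, ← integral_add
      (Continuous.integrable_restrict_ball (by unfold w u; fun_prop) _ _)
      (Continuous.integrable_restrict_ball (by unfold w; fun_prop) _ _)]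
    congr 1 with y
    ring
  rw [← setAverage_u_sub p hr, setAverage_eq_div, setAverage_eq_div, hsplit, add_div,
    mul_div_cancel_right₀ _ (setIntegral_ball_w p hr.le ▸ by positivity), add_comm]

theorem fderiv_u_apply (z v : ℝ²) :
    fderiv ℝ u z v = (2 * z 0 - 3 * z 1) * v 0 + (2 * z 1 - 3 * z 0) * v 1 := by
  unfold u
  simp (disch := fun_prop) [fderiv_fun_add, fderiv_fun_sub, fderiv_fun_mul, fderiv_fun_pow,
    EuclideanSpace.fderiv_apply_apply]
  ring

theorem fderiv_w_apply (z v : ℝ²) : fderiv ℝ w z v = 2 * (z 0 + z 1) * (v 0 + v 1) := by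
  unfold w
  simp (disch := fun_prop) [fderiv_fun_add, fderiv_fun_pow, EuclideanSpace.fderiv_apply_apply]
  ring

theorem w_mul_laplacian_u_add_two_inner_gradient (p : ℝ²) :
    w p * (∑ k : Fin 2, fderiv ℝ (fun z => fderiv ℝ u z (EuclideanSpace.single k 1)) p
        (EuclideanSpace.single k 1)) + 2 * ⟪gradient w p, gradient u p⟫ = 0 := by
  simp (disch := fun_prop) only [EuclideanSpace.inner_gradient_gradient, fderiv_u_apply,
    fderiv_w_apply, fderiv_fun_add, fderiv_fun_sub, fderiv_mul_const, fderiv_const_mul]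
  simp [EuclideanSpace.fderiv_apply_apply, w]
  ring

end BoseExample

/-- In `ℝ²` with `w(x,y) = (x+y)²`, `u(x,y) = x² - 3xy + y²` and `μ = w·L²`,
the `μ`-average of `u` on `B_r(x,y)` equals `u(x,y) + r⁴/(6(r² + 2(x+y)²))`; equivalently
`Δ_{μ,r}u(x,y) = r²/(6(r² + 2(x+y)²))`. In particular `wΔu + 2∇w·∇u = 0` everywhere, yet `u`
does not satisfy the mean value property with respect to `μ` at any point. -/
theorem bose_example_weighted_harmonic_not_mean_value
    (w u : EuclideanSpace ℝ (Fin 2) → ℝ)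
    (hw : w = fun p => (p 0 + p 1) ^ 2)
    (hu : u = fun p => (p 0) ^ 2 - 3 * (p 0) * (p 1) + (p 1) ^ 2)
    (μ : Measure (EuclideanSpace ℝ (Fin 2)))
    (hμ : μ = volume.withDensity fun p => ENNReal.ofReal (w p)) :
    (∀ (p : EuclideanSpace ℝ (Fin 2)) (r : ℝ), 0 < r →
      (⨍ y in Metric.ball p r, u y ∂μ) = u p + r ^ 4 / (6 * (r ^ 2 + 2 * (p 0 + p 1) ^ 2))) ∧
    (∀ (p : EuclideanSpace ℝ (Fin 2)) (r : ℝ), 0 < r →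
      (1 / r ^ 2) * (⨍ y in Metric.ball p r, (u y - u p) ∂μ) =
        r ^ 2 / (6 * (r ^ 2 + 2 * (p 0 + p 1) ^ 2))) ∧
    (∀ p : EuclideanSpace ℝ (Fin 2),
      w p * (∑ k : Fin 2, fderiv ℝ (fun z => fderiv ℝ u z (EuclideanSpace.single k 1)) p
          (EuclideanSpace.single k 1))
        + 2 * ⟪gradient w p, gradient u p⟫ = 0) ∧
    (∀ (p : EuclideanSpace ℝ (Fin 2)) (r : ℝ), 0 < r →
      (⨍ y in Metric.ball p r, u y ∂μ) ≠ u p) := by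
  obtain rfl : w = BoseExample.w := hw
  obtain rfl : u = BoseExample.u := hu
  obtain rfl : μ = BoseExample.μ := hμ
  refine ⟨fun p r hr => BoseExample.setAverage_u p hr, fun p r hr => ?_,
    BoseExample.w_mul_laplacian_u_add_two_inner_gradient, fun p r hr => ?_⟩
  · rw [BoseExample.setAverage_u_sub p hr]
    field_simp
  · rw [BoseExample.setAverage_u p hr, Ne, add_eq_left]
    positivity
end

section
/- Let n ≥ 3, μ := Lⁿ + δ_o on ℝⁿ with the Euclidean distance, where δ_o is the Dirac mass at the origin o, and let u ∈ L¹_loc(ℝⁿ, Lⁿ). If o is a Lebesgue point of u with respect to Lⁿ (i.e. there is u*(o) ∈ ℝ with ⨍_{B_r(o)} |u(y) − u*(o)| dy → 0 as r → 0⁺), then the AMV Laplacian Δ_μ u(o) exists and equals 0, for any choice of the value u(o). -/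
/-!
The Dirac mass sits at the centre of every ball `B_r(0)`, where `u - u(0)` vanishes, so it does not
change `∫_{B_r(0)} (u - u(0)) dμ` but adds `1` to `μ(B_r(0))`. Hence
`|Δ_{μ,r} u(0)| ≤ r⁻² |B_r| |⨍_{B_r(0)} u dy - u(0)| = |B_1| r^(n-2) |⨍_{B_r(0)} u dy - u(0)|`.
At a Lebesgue point the averages of `u` converge to `u*(0)`, so for `n ≥ 3` the bound tends to `0`.
-/

open MeasureTheory Metric Filter Topology Real
open scoped ENNReal

namespace MeasureTheory

section Average

variable {α E : Type*} [MeasurableSpace α] [NormedAddCommGroup E] [NormedSpace ℝ E]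
  {μ : Measure α} {s : Set α} {f : α → E}

theorem norm_average_le_average_norm :
    ‖⨍ x, f x ∂μ‖ ≤ ⨍ x, ‖f x‖ ∂μ :=
  norm_integral_le_integral_norm f

theorem setAverage_sub_const [CompleteSpace E] (hs₀ : μ s ≠ 0) (hs : μ s ≠ ∞)
    (hf : IntegrableOn f s μ) (c : E) :
    ⨍ x in s, (f x - c) ∂μ = ⨍ x in s, f x ∂μ - c := by
  have := NeZero.mk hs₀
  have := Fact.mk hs.lt_top
  rw [average, integral_sub hf.to_average (integrable_const c)]
  exact congrArg _ (average_const _ c)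

theorem tendsto_setAverage_of_tendsto_setAverage_norm_sub [CompleteSpace E] {ι : Type*}
    {l : Filter ι} {t : ι → Set α} (ht₀ : ∀ᶠ i in l, μ (t i) ≠ 0) (ht : ∀ᶠ i in l, μ (t i) ≠ ∞)
    (hf : ∀ᶠ i in l, IntegrableOn f (t i) μ) {a : E}
    (hlim : Tendsto (fun i => ⨍ y in t i, ‖f y - a‖ ∂μ) l (𝓝 0)) :
    Tendsto (fun i => ⨍ y in t i, f y ∂μ) l (𝓝 a) := by
  rw [tendsto_iff_norm_sub_tendsto_zero]
  refine squeeze_zero' (.of_forall fun _ => norm_nonneg _) ?_ hlim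
  filter_upwards [ht₀, ht, hf] with i hi₀ hi hfi
  rw [← setAverage_sub_const hi₀ hi hfi]
  exact norm_average_le_average_norm

end Average

section Dirac

variable {α E : Type*} [MeasurableSpace α] [MeasurableSingletonClass α] [NormedAddCommGroup E]
  [NormedSpace ℝ E] [CompleteSpace E] {ν : Measure α} {s : Set α} {f : α → E} {x : α}

theorem setIntegral_add_dirac_of_apply_eq_zero (hf : IntegrableOn f s ν) (hfx : f x = 0) :
    ∫ y in s, f y ∂(ν + Measure.dirac x) = ∫ y in s, f y ∂ν := by
  classical
  rw [Measure.restrict_add, integral_add_measure hf (integrable_dirac (by simp)).restrict,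
    setIntegral_dirac]
  split_ifs <;> simp [hfx]

theorem norm_setAverage_add_dirac_le (hs : ν s ≠ ∞) (hxs : x ∈ s) (hf : IntegrableOn f s ν)
    (hfx : f x = 0) :
    ‖⨍ y in s, f y ∂(ν + Measure.dirac x)‖ ≤ ν.real s * ‖⨍ y in s, f y ∂ν‖ := by
  have hmass : (ν + Measure.dirac x).real s = ν.real s + 1 := by
    rw [measureReal_add_apply, measureReal_def, measureReal_def, Measure.dirac_apply_of_mem hxs,
      ENNReal.toReal_one]
  rw [setAverage_eq, setIntegral_add_dirac_of_apply_eq_zero hf hfx,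
    ← measure_smul_setAverage f hs, hmass, norm_smul, norm_smul,
    Real.norm_of_nonneg measureReal_nonneg]
  have hpos : 0 ≤ ν.real s := measureReal_nonneg
  calc ‖(ν.real s + 1)⁻¹‖ * (ν.real s * ‖⨍ y in s, f y ∂ν‖)
      ≤ 1 * (ν.real s * ‖⨍ y in s, f y ∂ν‖) := by
        gcongr
        rw [norm_inv, Real.norm_of_nonneg (by positivity)]
        exact inv_le_one_of_one_le₀ (by linarith)
    _ = ν.real s * ‖⨍ y in s, f y ∂ν‖ := one_mul _

end Dirac

end MeasureTheory

open MeasureTheory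

/-- The `r`-scale AMV Laplacian `Δ_{μ,r} u(x)`. -/
noncomputable def amvLaplacianScale {X : Type*} [PseudoMetricSpace X] [MeasurableSpace X]
    (μ : Measure X) (u : X → ℝ) (x : X) (r : ℝ) : ℝ :=
  1 / r ^ 2 * ⨍ y in ball x r, (u y - u x) ∂μ

section Ball

variable {X : Type*} [PseudoMetricSpace X] [ProperSpace X] [MeasurableSpace X] {μ : Measure X}
  [IsFiniteMeasureOnCompacts μ] [μ.IsOpenPosMeasure] {u : X → ℝ} {x : X}

theorem tendsto_setAverage_ball_of_tendsto_setAverage_abs_sub (hu : LocallyIntegrable u μ)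
    {a : ℝ} (ha : Tendsto (fun r => ⨍ y in ball x r, |u y - a| ∂μ) (𝓝[>] 0) (𝓝 0)) :
    Tendsto (fun r => ⨍ y in ball x r, u y ∂μ) (𝓝[>] 0) (𝓝 a) := by
  refine tendsto_setAverage_of_tendsto_setAverage_norm_sub ?_ (.of_forall fun r => ?_)
    (.of_forall fun r => ?_) (by simpa only [Real.norm_eq_abs] using ha)
  · filter_upwards [self_mem_nhdsWithin] with r hr
    exact (measure_ball_pos μ x hr).ne'
  · exact measure_ball_lt_top.ne
  · exact (hu.integrableOn_isCompact (isCompact_closedBall x r)).mono_set ball_subset_closedBall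

end Ball

section AddHaar

variable {E : Type*} [NormedAddCommGroup E] [NormedSpace ℝ E] [FiniteDimensional ℝ E]
  [MeasurableSpace E] [BorelSpace E] {ν : Measure E} [ν.IsAddHaarMeasure] {u : E → ℝ} {x : E}

theorem abs_amvLaplacianScale_add_dirac_self_le (hE : 2 ≤ Module.finrank ℝ E)
    (hu : LocallyIntegrable u ν) {r : ℝ} (hr : 0 < r) :
    |amvLaplacianScale (ν + Measure.dirac x) u x r|
      ≤ ν.real (ball 0 1) * r ^ (Module.finrank ℝ E - 2) * |⨍ y in ball x r, u y ∂ν - u x| := by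
  have : Nontrivial E := Module.nontrivial_of_finrank_pos (R := ℝ) (by omega)
  have hball : ν.real (ball x r) = r ^ Module.finrank ℝ E * ν.real (ball 0 1) := by
    rw [measureReal_def, Measure.addHaar_ball ν x hr.le, ENNReal.toReal_mul,
      ENNReal.toReal_ofReal (by positivity), measureReal_def]
  have hfin : ν (ball x r) ≠ ∞ := measure_ball_lt_top.ne
  have hint : IntegrableOn u (ball x r) ν :=
    (hu.integrableOn_isCompact (isCompact_closedBall x r)).mono_set ball_subset_closedBall
  have hpow : r ^ Module.finrank ℝ E = r ^ 2 * r ^ (Module.finrank ℝ E - 2) := by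
    rw [← pow_add]; congr 1; omega
  rw [← setAverage_sub_const (measure_ball_pos ν x hr).ne' hfin hint]
  calc |amvLaplacianScale (ν + Measure.dirac x) u x r|
      = 1 / r ^ 2 * ‖⨍ y in ball x r, (u y - u x) ∂(ν + Measure.dirac x)‖ := by
        rw [amvLaplacianScale, abs_mul, abs_of_pos (by positivity), Real.norm_eq_abs]
    _ ≤ 1 / r ^ 2 * (ν.real (ball x r) * ‖⨍ y in ball x r, (u y - u x) ∂ν‖) := by
        gcongr
        exact norm_setAverage_add_dirac_le hfin (mem_ball_self hr)
          (hint.sub (integrableOn_const hfin)) (sub_self _)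
    _ = _ := by
        rw [hball, hpow, Real.norm_eq_abs]
        field_simp

theorem tendsto_amvLaplacianScale_add_dirac_self (hE : 3 ≤ Module.finrank ℝ E)
    (hu : LocallyIntegrable u ν) {a : ℝ}
    (ha : Tendsto (fun r => ⨍ y in ball x r, u y ∂ν) (𝓝[>] 0) (𝓝 a)) :
    Tendsto (amvLaplacianScale (ν + Measure.dirac x) u x) (𝓝[>] 0) (𝓝 0) := by
  have hpow : Tendsto (fun r : ℝ => r ^ (Module.finrank ℝ E - 2)) (𝓝[>] 0) (𝓝 0) := by
    have h := (continuous_pow (Module.finrank ℝ E - 2)).tendsto (0 : ℝ)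
    rw [zero_pow (by omega)] at h
    exact h.mono_left nhdsWithin_le_nhds
  have hbound := ((hpow.const_mul (ν.real (ball 0 1))).mul ((ha.sub_const (u x)).abs))
  rw [mul_zero, zero_mul] at hbound
  refine squeeze_zero_norm' ?_ hbound
  filter_upwards [self_mem_nhdsWithin] with r hr
  rw [Real.norm_eq_abs]
  exact abs_amvLaplacianScale_add_dirac_self_le (by omega) hu hr

end AddHaar

/-- For `n ≥ 3`, `μ = Lⁿ + δ₀` on `ℝⁿ` and `u ∈ L¹_loc(ℝⁿ, Lⁿ)`, if the origin is
a Lebesgue point of `u` with respect to `Lⁿ` (with Lebesgue value `ustar`), then the AMV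
Laplacian of `u` at the origin exists and equals `0`, for any choice of the value `u(0)`. -/
theorem amv_laplacian_lebesgue_plus_dirac_dim_ge_three
    (n : ℕ) (hn : 3 ≤ n)
    (u : EuclideanSpace ℝ (Fin n) → ℝ) (hu : LocallyIntegrable u volume)
    (μ : Measure (EuclideanSpace ℝ (Fin n)))
    (hμ : μ = volume + Measure.dirac (0 : EuclideanSpace ℝ (Fin n)))
    (ustar : ℝ)
    (hleb : Filter.Tendsto
      (fun r : ℝ => ⨍ y in Metric.ball (0 : EuclideanSpace ℝ (Fin n)) r, |u y - ustar| ∂volume)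
      (𝓝[>] (0 : ℝ)) (𝓝 0)) :
    Filter.Tendsto
      (fun r : ℝ =>
        (1 / r ^ 2) * ⨍ y in Metric.ball (0 : EuclideanSpace ℝ (Fin n)) r, (u y - u 0) ∂μ)
      (𝓝[>] (0 : ℝ)) (𝓝 0) := by
  subst hμ
  exact tendsto_amvLaplacianScale_add_dirac_self (by simpa using hn) hu
    (tendsto_setAverage_ball_of_tendsto_setAverage_abs_sub hu hleb)
end

section
/- Let n = 1, μ := L¹ + δ_o on ℝ with the Euclidean distance, where δ_o is the Dirac mass at the origin o, and let u ∈ L¹_loc(ℝ, L¹). Assume o is a Lebesgue point of u with respect to L¹ with u*(o) = u(o), and assume additionally that r^{-1} ⨍_{B_r(o)} (u(y) − u(o)) dy converges to some constant b ∈ ℝ as r → 0⁺. Then the AMV Laplacian Δ_μ u(o) exists and Δ_μ u(o) = 2b. -/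
open MeasureTheory Metric Filter Topology Real
open scoped ENNReal

/-!
The Dirac mass at the origin does not see the integrand `u y - u 0`, which vanishes there, but it
adds `1` to the mass of every ball around the origin. Hence
`Δ_{μ,r} u(0) = r⁻² (2r + 1)⁻¹ ∫_{B_r(0)} (u y - u 0) dy = 2 / (2r + 1) · r⁻¹ ⨍_{B_r(0)} (u y - u 0) dy`,
which tends to `2b`.
-/

section AddMeasure

variable {α E : Type*} [MeasurableSpace α] [NormedAddCommGroup E] [NormedSpace ℝ E]

theorem integral_add_measure_of_ae_eq_zero {ν ρ : Measure α} {f : α → E} (hf : f =ᵐ[ρ] 0) :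
    ∫ x, f x ∂(ν + ρ) = ∫ x, f x ∂ν := by
  have hρ : ∫ x, f x ∂ρ = 0 := integral_eq_zero_of_ae hf
  by_cases hν : Integrable f ν
  · rw [integral_add_measure hν ((integrable_zero α E ρ).congr hf.symm), hρ, add_zero]
  · -- a non-integrable `f` has junk integral `0` for both measures
    rw [integral_undef hν,
      integral_undef fun h ↦ hν (h.mono_measure (Measure.le_add_right le_rfl))]

variable [MeasurableSingletonClass α]

theorem setIntegral_add_dirac_of_eq_zero (ν : Measure α) (s : Set α) {f : α → E} {a : α}
    (ha : f a = 0) : ∫ x in s, f x ∂(ν + Measure.dirac a) = ∫ x in s, f x ∂ν := by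
  rw [Measure.restrict_add]
  refine integral_add_measure_of_ae_eq_zero (ae_restrict_of_ae ?_)
  simp [ha]

theorem setAverage_add_dirac_of_eq_zero {ν : Measure α} {s : Set α} (hs : ν s ≠ ∞) {f : α → E}
    {a : α} (has : a ∈ s) (ha : f a = 0) :
    ⨍ x in s, f x ∂(ν + Measure.dirac a) = (ν.real s + 1)⁻¹ • ∫ x in s, f x ∂ν := by
  have hmass : (ν + Measure.dirac a).real s = ν.real s + 1 := by
    rw [measureReal_add_apply hs (by simp [Measure.dirac_apply_of_mem has]),
      measureReal_def (Measure.dirac a), Measure.dirac_apply_of_mem has, ENNReal.toReal_one]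
  rw [setAverage_eq, hmass, setIntegral_add_dirac_of_eq_zero ν s ha]

end AddMeasure

theorem scaled_setAverage_ball_volume_add_dirac {f : ℝ → ℝ} (hf : f 0 = 0) {r : ℝ} (hr : 0 < r) :
    (1 / r ^ 2) * ⨍ y in ball (0 : ℝ) r, f y ∂(volume + Measure.dirac 0)
      = 2 / (2 * r + 1) * ((1 / r) * ⨍ y in ball (0 : ℝ) r, f y ∂volume) := by
  have hvol : volume.real (ball (0 : ℝ) r) = 2 * r := by
    rw [measureReal_def, Real.volume_ball, ENNReal.toReal_ofReal (by positivity)]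
  rw [setAverage_add_dirac_of_eq_zero measure_ball_lt_top.ne (mem_ball_self hr) hf,
    setAverage_eq, hvol, smul_eq_mul, smul_eq_mul]
  field_simp

theorem amv_laplacian_lebesgue_plus_dirac_dim_one_general
    (u : ℝ → ℝ)
    (μ : Measure ℝ) (hμ : μ = volume + Measure.dirac (0 : ℝ))
    (b : ℝ)
    (hb : Filter.Tendsto
      (fun r : ℝ => (1 / r) * ⨍ y in Metric.ball (0 : ℝ) r, (u y - u 0) ∂volume)
      (𝓝[>] (0 : ℝ)) (𝓝 b)) :
    Filter.Tendsto
      (fun r : ℝ => (1 / r ^ 2) * ⨍ y in Metric.ball (0 : ℝ) r, (u y - u 0) ∂μ)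
      (𝓝[>] (0 : ℝ)) (𝓝 (2 * b)) := by
  subst hμ
  have hcoef : Tendsto (fun r : ℝ ↦ 2 / (2 * r + 1)) (𝓝[>] 0) (𝓝 2) := by
    have hcont : ContinuousAt (fun r : ℝ ↦ 2 / (2 * r + 1)) 0 := by fun_prop (disch := norm_num)
    simpa using hcont.tendsto.mono_left nhdsWithin_le_nhds
  refine (hcoef.mul hb).congr' ?_
  filter_upwards [self_mem_nhdsWithin] with r (hr : 0 < r)
  exact (scaled_setAverage_ball_volume_add_dirac (sub_self (u 0)) hr).symm

/-- For `μ = L¹ + δ₀` on `ℝ` and `u ∈ L¹_loc(ℝ, L¹)`, if the origin is a Lebesgue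
point of `u` with Lebesgue value `u(0)`, and `r⁻¹ ⨍_{B_r(0)} (u(y) - u(0)) dy → b` as `r → 0⁺`,
then the AMV Laplacian of `u` at the origin exists and equals `2b`. -/
theorem amv_laplacian_lebesgue_plus_dirac_dim_one
    (u : ℝ → ℝ) (hu : LocallyIntegrable u volume)
    (μ : Measure ℝ) (hμ : μ = volume + Measure.dirac (0 : ℝ))
    (hleb : Filter.Tendsto
      (fun r : ℝ => ⨍ y in Metric.ball (0 : ℝ) r, |u y - u 0| ∂volume)
      (𝓝[>] (0 : ℝ)) (𝓝 0))
    (b : ℝ)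
    (hb : Filter.Tendsto
      (fun r : ℝ => (1 / r) * ⨍ y in Metric.ball (0 : ℝ) r, (u y - u 0) ∂volume)
      (𝓝[>] (0 : ℝ)) (𝓝 b)) :
    Filter.Tendsto
      (fun r : ℝ => (1 / r ^ 2) * ⨍ y in Metric.ball (0 : ℝ) r, (u y - u 0) ∂μ)
      (𝓝[>] (0 : ℝ)) (𝓝 (2 * b)) :=
  amv_laplacian_lebesgue_plus_dirac_dim_one_general u μ hμ b hb
end

section
/- Let (X,d) be a metric space equipped with μ = μ_1 + ⋯ + μ_k, where each μ_j is a Borel measure supported on a closed set Y_j ⊆ X and is Q_j-Ahlfors regular on Y_j, with Q_1 ≤ Q_2 ≤ ⋯ ≤ Q_k. Let u ∈ L¹_loc(X,μ) and let x ∈ ⋂_{i=1}^{l} Y_{j_i}, where {j_i} is an increasing subsequence of {1,…,k} with x ∉ Y_j for j ∉ {j_1,…,j_l}, and suppose Q_{j_1} = Q_{j_2} = ⋯ = Q_{j_n} < Q_{j_{n+1}} ≤ ⋯ ≤ Q_{j_l}. Assume: (i) r^{Q_{j_i} − Q_{j_1}} |Δ_{μ_{j_i}, r} u(x)| → 0 as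 r → 0⁺ for all n+1 ≤ i ≤ l; (ii) the AMV Laplacians Δ_{μ_{j_1}} u(x), …, Δ_{μ_{j_n}} u(x) all exist; (iii) for each 1 ≤ i ≤ n the limit α_i(x) := lim_{r→0⁺} μ_{j_i}(B_r(x)) / μ(B_r(x)) exists. Then Δ_μ u(x) exists, Δ_μ u(x) = Σ_{i=1}^{n} α_i(x) Δ_{μ_{j_i}} u(x), and Σ_{i=1}^{n} α_i(x) = 1. -/
open MeasureTheory Metric Filter Topology Real
open scoped ENNReal

/-!
On small balls around `x` only the strata through `x` carry mass, and the `μ`-average is the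
convex combination of the `μ_{j_i}`-averages with weights `μ_{j_i}(B_r(x)) / μ(B_r(x))`. Comparing
with the lowest stratum through `x`, Ahlfors regularity bounds the weight of a stratum of larger
dimension `Q` by a multiple of `r^(Q - Q_{j_1})`, so that weight tends to `0` and, by (i), so does
its contribution. Letting `r → 0` in the decomposition and in `∑ weights = 1` gives both claims.
-/

lemma tendsto_finsetSum_filter {α M ι : Type*} [AddCommMonoid M] [TopologicalSpace M]
    [ContinuousAdd M] {F : Filter α} (s : Finset ι) (p : ι → Prop) [DecidablePred p]
    {f : ι → α → M} {g : ι → M} (hp : ∀ i ∈ s, p i → Tendsto (f i) F (𝓝 (g i)))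
    (hnp : ∀ i ∈ s, ¬ p i → Tendsto (f i) F (𝓝 0)) :
    Tendsto (fun a => ∑ i ∈ s, f i a) F (𝓝 (∑ i ∈ s.filter p, g i)) := by
  rw [Finset.sum_filter]
  refine tendsto_finsetSum s fun i hi => ?_
  split_ifs with h
  exacts [hp i hi h, hnp i hi h]

lemma tendsto_mul_zero_of_le_mul {α : Type*} {F : Filter α} {f g φ : α → ℝ} {K : ℝ}
    (hf₀ : ∀ᶠ a in F, 0 ≤ f a) (hf : ∀ᶠ a in F, f a ≤ K * φ a)
    (hφg : Tendsto (fun a => φ a * |g a|) F (𝓝 0)) :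
    Tendsto (fun a => f a * g a) F (𝓝 0) := by
  refine squeeze_zero_norm' ?_ (by simpa using hφg.const_mul K)
  filter_upwards [hf₀, hf] with a h₀ h
  rw [Real.norm_eq_abs, abs_mul, abs_of_nonneg h₀, ← mul_assoc]
  exact mul_le_mul_of_nonneg_right h (abs_nonneg _)

lemma ENNReal.toReal_div_toReal_le {a b : ℝ≥0∞} {A B : ℝ} (hA : 0 ≤ A) (hB : 0 < B)
    (ha : a ≤ ENNReal.ofReal A) (hb : ENNReal.ofReal B ≤ b) (hb_top : b ≠ ∞) :
    a.toReal / b.toReal ≤ A / B :=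
  div_le_div₀ hA (ENNReal.toReal_le_of_le_ofReal hA ha) hB
    ((ENNReal.ofReal_le_iff_le_toReal hb_top).1 hb)

namespace MeasureTheory

variable {X : Type*} [MeasurableSpace X]

lemma Measure.restrict_finsetSum {ι : Type*} (s : Finset ι) (ν : ι → Measure X) (t : Set X) :
    (∑ i ∈ s, ν i).restrict t = ∑ i ∈ s, (ν i).restrict t :=
  _root_.map_sum (Measure.restrictₗ t) ν s

lemma Measure.restrict_sum_eq_sum_comp_of_null {ι κ : Type*} [Fintype ι] [Fintype κ]
    {e : κ → ι} (he : Function.Injective e) (ν : ι → Measure X) {t : Set X}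
    (hnull : ∀ i ∉ Set.range e, ν i t = 0) :
    (∑ i, ν i).restrict t = (∑ j, ν (e j)).restrict t := by
  rw [Measure.restrict_finsetSum, Measure.restrict_finsetSum]
  exact (Fintype.sum_of_injective e he _ _
    (fun i hi => Measure.restrict_eq_zero.2 (hnull i hi)) fun _ => rfl).symm

lemma Measure.finsetSum_apply_ne_top {ι : Type*} {s : Finset ι} {ν : ι → Measure X} {t : Set X}
    (hfin : ∀ i ∈ s, ν i t ≠ ∞) : (∑ i ∈ s, ν i) t ≠ ∞ := by
  rw [Measure.finsetSum_apply]
  exact ENNReal.sum_ne_top.2 hfin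

lemma Measure.apply_le_sum_apply {ι : Type*} [Fintype ι] (ν : ι → Measure X) (i : ι) (t : Set X) :
    ν i t ≤ (∑ j, ν j) t :=
  Measure.le_iff'.1 (Finset.single_le_sum (fun _ _ => Measure.zero_le _) (Finset.mem_univ i)) t

lemma setAverage_finsetSum_measure {ι : Type*} (s : Finset ι) (ν : ι → Measure X) {t : Set X}
    {f : X → ℝ} (hfin : ∀ i ∈ s, ν i t ≠ ∞) (hf : IntegrableOn f t (∑ i ∈ s, ν i)) :
    ⨍ y in t, f y ∂(∑ i ∈ s, ν i)
      = ∑ i ∈ s, (ν i t).toReal / ((∑ i ∈ s, ν i) t).toReal * ⨍ y in t, f y ∂(ν i) := by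
  have hres := Measure.restrict_finsetSum s ν t
  have hfi : ∀ i ∈ s, IntegrableOn f t (ν i) := by
    rw [IntegrableOn, hres] at hf
    exact integrable_finsetSum_measure.1 hf
  have hterm : ∀ i ∈ s, (ν i t).toReal / ((∑ i ∈ s, ν i) t).toReal * ⨍ y in t, f y ∂(ν i)
      = ((∑ i ∈ s, ν i) t).toReal⁻¹ * ∫ y in t, f y ∂(ν i) := by
    intro i hi
    by_cases h0 : ν i t = 0
    · simp [h0, Measure.restrict_eq_zero.2 h0]
    · have : (ν i t).toReal ≠ 0 := ENNReal.toReal_ne_zero.2 ⟨h0, hfin i hi⟩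
      rw [setAverage_eq, measureReal_def, smul_eq_mul]
      field_simp
  rw [Finset.sum_congr rfl hterm, ← Finset.mul_sum, ← integral_finsetSum_measure hfi, ← hres,
    setAverage_eq, smul_eq_mul, measureReal_def]

lemma sum_toReal_div_finsetSum_apply {ι : Type*} (s : Finset ι) (ν : ι → Measure X) {t : Set X}
    (hfin : ∀ i ∈ s, ν i t ≠ ∞) (hpos : (∑ i ∈ s, ν i) t ≠ 0) :
    ∑ i ∈ s, (ν i t).toReal / ((∑ i ∈ s, ν i) t).toReal = 1 := by
  rw [← Finset.sum_div, ← ENNReal.toReal_sum hfin, ← Measure.finsetSum_apply]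
  exact div_self (ENNReal.toReal_ne_zero.2 ⟨hpos, Measure.finsetSum_apply_ne_top hfin⟩)

end MeasureTheory

section AMVLaplacian

variable {X : Type*} [PseudoMetricSpace X] [MeasurableSpace X]

noncomputable def amvLaplacianAtScale (μ : Measure X) (u : X → ℝ) (x : X) (r : ℝ) : ℝ :=
  (1 / r ^ 2) * ⨍ y in ball x r, (u y - u x) ∂μ

noncomputable def ballDensityRatio (ν μ : Measure X) (x : X) (r : ℝ) : ℝ :=
  (ν (ball x r)).toReal / (μ (ball x r)).toReal

lemma ballDensityRatio_nonneg (ν μ : Measure X) (x : X) (r : ℝ) :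
    0 ≤ ballDensityRatio ν μ x r :=
  div_nonneg ENNReal.toReal_nonneg ENNReal.toReal_nonneg

lemma amvLaplacianAtScale_congr {μ μ' : Measure X} {u : X → ℝ} {x : X} {r : ℝ}
    (h : μ.restrict (ball x r) = μ'.restrict (ball x r)) :
    amvLaplacianAtScale μ u x r = amvLaplacianAtScale μ' u x r := by
  rw [amvLaplacianAtScale, amvLaplacianAtScale, h]

lemma ballDensityRatio_congr {ν μ μ' : Measure X} {x : X} {r : ℝ}
    (h : μ.restrict (ball x r) = μ'.restrict (ball x r)) :
    ballDensityRatio ν μ x r = ballDensityRatio ν μ' x r := by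
  rw [ballDensityRatio, ballDensityRatio, ← Measure.restrict_apply_self μ, h,
    Measure.restrict_apply_self]

lemma eventually_forall_measure_ball_eq_zero {ι : Type*} [Finite ι] {ν : ι → Measure X}
    {Y : ι → Set X} (hY : ∀ i, IsClosed (Y i)) (hν : ∀ i, ν i (Y i)ᶜ = 0) (x : X) :
    ∀ᶠ r in 𝓝 (0 : ℝ), ∀ i, x ∉ Y i → ν i (ball x r) = 0 := by
  refine eventually_all.2 fun i => ?_
  by_cases hx : x ∈ Y i
  · exact Eventually.of_forall fun _ h => absurd hx h
  obtain ⟨ε, hε, hball⟩ := Metric.mem_nhds_iff.1 ((hY i).isOpen_compl.mem_nhds hx)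
  filter_upwards [eventually_lt_nhds hε] with r hr _
  exact measure_mono_null ((ball_subset_ball hr.le).trans hball) (hν i)

lemma MeasureTheory.LocallyIntegrable.eventually_integrableOn_ball {μ : Measure X} {u : X → ℝ}
    (hu : LocallyIntegrable u μ) (x : X) :
    ∀ᶠ r in 𝓝 (0 : ℝ), IntegrableOn u (ball x r) μ := by
  obtain ⟨s, hs, hus⟩ := hu x
  obtain ⟨ε, hε, hball⟩ := Metric.mem_nhds_iff.1 hs
  filter_upwards [eventually_lt_nhds hε] with r hr
  exact hus.mono_set ((ball_subset_ball hr.le).trans hball)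

lemma amvLaplacianAtScale_sum {ι : Type*} [Fintype ι] (ν : ι → Measure X) {u : X → ℝ}
    {x : X} {r : ℝ} (hfin : ∀ i, ν i (ball x r) ≠ ∞)
    (hu : IntegrableOn u (ball x r) (∑ i, ν i)) :
    amvLaplacianAtScale (∑ i, ν i) u x r
      = ∑ i, ballDensityRatio (ν i) (∑ j, ν j) x r * amvLaplacianAtScale (ν i) u x r := by
  have hsum_fin : (∑ i, ν i) (ball x r) ≠ ∞ := Measure.finsetSum_apply_ne_top fun i _ => hfin i
  rw [amvLaplacianAtScale, setAverage_finsetSum_measure Finset.univ ν (fun i _ => hfin i)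
    (f := fun y => u y - u x) (hu.sub (integrableOn_const hsum_fin)), Finset.mul_sum]
  simp only [ballDensityRatio, amvLaplacianAtScale]
  exact Finset.sum_congr rfl fun i _ => by ring

variable {ι : Type*} [Fintype ι]

lemma ballDensityRatio_le_of_ahlfors {ν : ι → Measure X} {x : X} {Q c C : ι → ℝ}
    (hA : ∀ i, ∀ r : ℝ, 0 < r → ENNReal.ofReal (c i * r ^ Q i) ≤ ν i (ball x r) ∧
      ν i (ball x r) ≤ ENNReal.ofReal (C i * r ^ Q i))
    {i i₀ : ι} (hc : 0 < c i₀) (hC : 0 ≤ C i) {r : ℝ} (hr : 0 < r) :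
    ballDensityRatio (ν i) (∑ j, ν j) x r ≤ C i / c i₀ * r ^ (Q i - Q i₀) := by
  rw [Real.rpow_sub hr, div_mul_div_comm]
  exact ENNReal.toReal_div_toReal_le (by positivity) (by positivity) (hA i r hr).2
    ((hA i₀ r hr).1.trans (Measure.apply_le_sum_apply ν i₀ _))
    (Measure.finsetSum_apply_ne_top fun j _ => ((hA j r hr).2.trans_lt ENNReal.ofReal_lt_top).ne)

theorem tendsto_amvLaplacianAtScale_sum_of_ahlfors {ν : ι → Measure X} {x : X}
    {Q c C : ι → ℝ}
    (hA : ∀ i, ∀ r : ℝ, 0 < r → ENNReal.ofReal (c i * r ^ Q i) ≤ ν i (ball x r) ∧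
      ν i (ball x r) ≤ ENNReal.ofReal (C i * r ^ Q i))
    {i₀ : ι} (hc : 0 < c i₀) (hC : ∀ i, 0 ≤ C i) {u : X → ℝ}
    (hu : ∀ᶠ r in 𝓝[>] (0 : ℝ), IntegrableOn u (ball x r) (∑ i, ν i))
    (p : ι → Prop) [DecidablePred p] (hQ : ∀ i, ¬ p i → Q i₀ < Q i)
    (hrest : ∀ i, ¬ p i → Tendsto (fun r : ℝ => r ^ (Q i - Q i₀) *
      |amvLaplacianAtScale (ν i) u x r|) (𝓝[>] 0) (𝓝 0))
    {L α : ι → ℝ} (hL : ∀ i, p i → Tendsto (amvLaplacianAtScale (ν i) u x) (𝓝[>] 0) (𝓝 (L i)))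
    (hα : ∀ i, p i → Tendsto (ballDensityRatio (ν i) (∑ j, ν j) x) (𝓝[>] 0) (𝓝 (α i))) :
    Tendsto (amvLaplacianAtScale (∑ i, ν i) u x) (𝓝[>] 0)
      (𝓝 (∑ i ∈ Finset.univ.filter p, α i * L i)) ∧
    ∑ i ∈ Finset.univ.filter p, α i = 1 := by
  have hfin : ∀ r : ℝ, 0 < r → ∀ i, ν i (ball x r) ≠ ∞ := fun r hr i =>
    ((hA i r hr).2.trans_lt ENNReal.ofReal_lt_top).ne
  have hbound : ∀ i, ∀ᶠ r in 𝓝[>] (0 : ℝ),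
      ballDensityRatio (ν i) (∑ j, ν j) x r ≤ C i / c i₀ * r ^ (Q i - Q i₀) := fun i =>
    eventually_mem_nhdsWithin.mono fun r hr => ballDensityRatio_le_of_ahlfors hA hc (hC i) hr
  have hratio_zero : ∀ i, ¬ p i →
      Tendsto (ballDensityRatio (ν i) (∑ j, ν j) x) (𝓝[>] 0) (𝓝 0) := fun i hi => by
    have hpow : Tendsto (fun r : ℝ => r ^ (Q i - Q i₀)) (𝓝[>] 0) (𝓝 0) :=
      (tendsto_id.mono_left nhdsWithin_le_nhds).rpow_const_nhds_zero (sub_pos.2 (hQ i hi))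
    exact squeeze_zero' (Eventually.of_forall (ballDensityRatio_nonneg _ _ x)) (hbound i)
      (by simpa using hpow.const_mul (C i / c i₀))
  constructor
  · refine (tendsto_finsetSum_filter Finset.univ p (fun i _ hi => (hα i hi).mul (hL i hi))
      fun i _ hi => tendsto_mul_zero_of_le_mul
        (Eventually.of_forall (ballDensityRatio_nonneg _ _ x)) (hbound i) (hrest i hi)).congr' ?_
    filter_upwards [eventually_mem_nhdsWithin, hu] with r hr hur
    exact (amvLaplacianAtScale_sum ν (hfin r hr) hur).symm
  · refine tendsto_nhds_unique (tendsto_finsetSum_filter Finset.univ p (fun i _ hi => hα i hi)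
      fun i _ hi => hratio_zero i hi) (tendsto_const_nhds.congr' ?_)
    filter_upwards [eventually_mem_nhdsWithin] with r hr
    refine (sum_toReal_div_finsetSum_apply Finset.univ ν (fun i _ => hfin r hr i) ?_).symm
    exact ((ENNReal.ofReal_pos.2 (mul_pos hc (Real.rpow_pos_of_pos hr _))).trans_le
      ((hA i₀ r hr).1.trans (Measure.apply_le_sum_apply ν i₀ _))).ne'

end AMVLaplacian

theorem amv_laplacian_stratified_measure_nondecreasing_general
    {X : Type*} [MetricSpace X] [MeasurableSpace X]
    (k : ℕ) (μs : Fin k → Measure X) (Y : Fin k → Set X)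
    (Q : Fin k → ℝ) (c C : Fin k → ℝ)
    (hYclosed : ∀ m, IsClosed (Y m))
    (hsupp : ∀ m, μs m (Y m)ᶜ = 0)
    (hc : ∀ m, 0 < c m) (hcC : ∀ m, c m ≤ C m)
    (hAhlfors : ∀ m, ∀ y ∈ Y m, ∀ r : ℝ, 0 < r →
      ENNReal.ofReal (c m * r ^ Q m) ≤ μs m (Metric.ball y r) ∧
      μs m (Metric.ball y r) ≤ ENNReal.ofReal (C m * r ^ Q m))
    (u : X → ℝ) (hu : LocallyIntegrable u (∑ m, μs m))
    (l : ℕ) (hl : 0 < l) (js : Fin l → Fin k) (hjs : StrictMono js)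
    (x : X) (hx : ∀ i, x ∈ Y (js i))
    (hxnot : ∀ m : Fin k, m ∉ Set.range js → x ∉ Y m)
    (nn : ℕ)
    (hQgt : ∀ i : Fin l, nn ≤ (i : ℕ) → Q (js ⟨0, hl⟩) < Q (js i))
    (hrest : ∀ i : Fin l, nn ≤ (i : ℕ) → Filter.Tendsto
      (fun r : ℝ => r ^ (Q (js i) - Q (js ⟨0, hl⟩)) *
        |(1 / r ^ 2) * ⨍ y in Metric.ball x r, (u y - u x) ∂(μs (js i))|)
      (𝓝[>] (0 : ℝ)) (𝓝 0))
    (L : Fin l → ℝ)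
    (hL : ∀ i : Fin l, (i : ℕ) < nn → Filter.Tendsto
      (fun r : ℝ => (1 / r ^ 2) * ⨍ y in Metric.ball x r, (u y - u x) ∂(μs (js i)))
      (𝓝[>] (0 : ℝ)) (𝓝 (L i)))
    (α : Fin l → ℝ)
    (hα : ∀ i : Fin l, (i : ℕ) < nn → Filter.Tendsto
      (fun r : ℝ => (μs (js i) (Metric.ball x r)).toReal / ((∑ m, μs m) (Metric.ball x r)).toReal)
      (𝓝[>] (0 : ℝ)) (𝓝 (α i))) :
    Filter.Tendsto
      (fun r : ℝ => (1 / r ^ 2) * ⨍ y in Metric.ball x r, (u y - u x) ∂(∑ m, μs m))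
      (𝓝[>] (0 : ℝ))
      (𝓝 (∑ i ∈ Finset.univ.filter (fun i : Fin l => (i : ℕ) < nn), α i * L i)) ∧
    (∑ i ∈ Finset.univ.filter (fun i : Fin l => (i : ℕ) < nn), α i) = 1 := by
  have hloc : ∀ᶠ r in 𝓝[>] (0 : ℝ),
      (∑ m, μs m).restrict (ball x r) = (∑ i, μs (js i)).restrict (ball x r) := by
    filter_upwards [nhdsWithin_le_nhds (eventually_forall_measure_ball_eq_zero hYclosed hsupp x)]
      with r hr
    exact Measure.restrict_sum_eq_sum_comp_of_null hjs.injective μs fun m hm => hr m (hxnot m hm)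
  have hint : ∀ᶠ r in 𝓝[>] (0 : ℝ), IntegrableOn u (ball x r) (∑ i, μs (js i)) := by
    filter_upwards [hloc, nhdsWithin_le_nhds (hu.eventually_integrableOn_ball x)] with r hr hur
    rwa [IntegrableOn, ← hr]
  obtain ⟨hlim, hsum⟩ := tendsto_amvLaplacianAtScale_sum_of_ahlfors
    (fun i r hr => hAhlfors (js i) x (hx i) r hr) (hc (js ⟨0, hl⟩))
    (fun i => (hc _).le.trans (hcC _)) hint (fun i : Fin l => (i : ℕ) < nn)
    (fun i hi => hQgt i (not_lt.1 hi)) (fun i hi => hrest i (not_lt.1 hi)) hL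
    (fun i hi => (hα i hi).congr' (hloc.mono fun r hr => ballDensityRatio_congr hr))
  exact ⟨hlim.congr' (hloc.mono fun r hr => (amvLaplacianAtScale_congr hr).symm), hsum⟩

/-- For `μ = μ₁ + ⋯ + μ_k` with nondecreasing Ahlfors dimensions `Q₁ ≤ ⋯ ≤ Q_k`,
a point `x` in the strata `Y_{j₁}, …, Y_{j_l}` only, with `Q_{j₁} = ⋯ = Q_{j_nn} < Q_{j_{nn+1}}`:
if the higher-dimensional rescaled AMV Laplacians vanish in the limit, the AMV Laplacians of the
lowest strata exist, and the density ratios `α_i(x)` exist, then `Δ_μ u(x)` exists, equals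
`Σ_{i=1}^{nn} α_i(x) Δ_{μ_{j_i}} u(x)`, and `Σ_{i=1}^{nn} α_i(x) = 1`. -/
theorem amv_laplacian_stratified_measure_nondecreasing
    {X : Type*} [MetricSpace X] [MeasurableSpace X] [BorelSpace X]
    (k : ℕ) (μs : Fin k → Measure X) (Y : Fin k → Set X)
    (Q : Fin k → ℝ) (c C : Fin k → ℝ)
    (hYclosed : ∀ m, IsClosed (Y m))
    (hsupp : ∀ m, μs m (Y m)ᶜ = 0)
    (hc : ∀ m, 0 < c m) (hcC : ∀ m, c m ≤ C m)
    (hQnn : ∀ m, 0 ≤ Q m)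
    (hAhlfors : ∀ m, ∀ y ∈ Y m, ∀ r : ℝ, 0 < r →
      ENNReal.ofReal (c m * r ^ Q m) ≤ μs m (Metric.ball y r) ∧
      μs m (Metric.ball y r) ≤ ENNReal.ofReal (C m * r ^ Q m))
    (hQmono : Monotone Q)
    (u : X → ℝ) (hu : LocallyIntegrable u (∑ m, μs m))
    (l : ℕ) (hl : 0 < l) (js : Fin l → Fin k) (hjs : StrictMono js)
    (x : X) (hx : ∀ i, x ∈ Y (js i))
    (hxnot : ∀ m : Fin k, m ∉ Set.range js → x ∉ Y m)
    (nn : ℕ) (hnn : 1 ≤ nn) (hnl : nn ≤ l)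
    (hQeq : ∀ i : Fin l, (i : ℕ) < nn → Q (js i) = Q (js ⟨0, hl⟩))
    (hQgt : ∀ i : Fin l, nn ≤ (i : ℕ) → Q (js ⟨0, hl⟩) < Q (js i))
    (hrest : ∀ i : Fin l, nn ≤ (i : ℕ) → Filter.Tendsto
      (fun r : ℝ => r ^ (Q (js i) - Q (js ⟨0, hl⟩)) *
        |(1 / r ^ 2) * ⨍ y in Metric.ball x r, (u y - u x) ∂(μs (js i))|)
      (𝓝[>] (0 : ℝ)) (𝓝 0))
    (L : Fin l → ℝ)
    (hL : ∀ i : Fin l, (i : ℕ) < nn → Filter.Tendsto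
      (fun r : ℝ => (1 / r ^ 2) * ⨍ y in Metric.ball x r, (u y - u x) ∂(μs (js i)))
      (𝓝[>] (0 : ℝ)) (𝓝 (L i)))
    (α : Fin l → ℝ)
    (hα : ∀ i : Fin l, (i : ℕ) < nn → Filter.Tendsto
      (fun r : ℝ => (μs (js i) (Metric.ball x r)).toReal / ((∑ m, μs m) (Metric.ball x r)).toReal)
      (𝓝[>] (0 : ℝ)) (𝓝 (α i))) :
    Filter.Tendsto
      (fun r : ℝ => (1 / r ^ 2) * ⨍ y in Metric.ball x r, (u y - u x) ∂(∑ m, μs m))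
      (𝓝[>] (0 : ℝ))
      (𝓝 (∑ i ∈ Finset.univ.filter (fun i : Fin l => (i : ℕ) < nn), α i * L i)) ∧
    (∑ i ∈ Finset.univ.filter (fun i : Fin l => (i : ℕ) < nn), α i) = 1 :=
  amv_laplacian_stratified_measure_nondecreasing_general k μs Y Q c C hYclosed hsupp hc hcC hAhlfors
    u hu l hl js hjs x hx hxnot nn hQgt hrest L hL α hα
end

section
/- Let (X,d,μ) be a proper metric measure space (closed bounded sets are compact) with μ a Borel measure that is positive on every nonempty open set and finite on balls. Let Ω ⊆ X be a nonempty bounded open set with nonempty boundary ∂Ω, and let u : Ω̄ → ℝ̄ be upper semicontinuous on Ω̄ with u ∈ L¹_loc(Ω,μ), such that the upper AMV Laplacian satisfies Δ̄_μ u(x) > 0 for every x ∈ Ω. Then max_{∂Ω} u = max_{Ω̄} u, and u does not attain its maximum over Ω̄ at any point of Ω. -/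
open MeasureTheory Metric Filter Topology

/-!
A point of `Ω` where `u` attains its maximum over `Ω̄` makes every mean difference
`⨍ (u y - u x)` nonpositive, so the upper AMV Laplacian there is `≤ 0`, contradicting strict
subharmonicity. Since `Ω̄` is compact and `u` is upper semicontinuous, the maximum over `Ω̄` is
attained, hence on `∂Ω = Ω̄ \ Ω`.
-/

/-- The upper AMV Laplacian `Δ̄_μ u(x)` relative to the set `s` (the paper's `Ω̄`). -/
noncomputable def upperAMVLaplacian {X : Type*} [MetricSpace X] [MeasurableSpace X]
    (μ : Measure X) (s : Set X) (u : X → ℝ) (x : X) : ℝ :=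
  limsup (fun r : ℝ => (1 / r ^ 2) * ⨍ y in ball x r ∩ s, (u y - u x) ∂μ) (𝓝[>] 0)

/-- No boundedness is needed: in `ℝ`, a `limsup` that is not cobounded takes the junk value `0`. -/
theorem Real.limsup_nonpos_of_eventually_nonpos {α : Type*} {f : Filter α} {v : α → ℝ}
    (hv : ∀ᶠ a in f, v a ≤ 0) : limsup v f ≤ 0 := by
  rw [limsup_eq]
  by_cases hbdd : BddBelow {a : ℝ | ∀ᶠ n in f, v n ≤ a}
  · exact csInf_le hbdd hv
  · rw [Real.sInf_of_not_bddBelow hbdd]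

theorem IsMaxOn.csSup_image_eq {α β : Type*} [ConditionallyCompleteLattice β] {f : α → β}
    {s : Set α} {a : α} (hmax : IsMaxOn f s a) (ha : a ∈ s) : sSup (f '' s) = f a :=
  IsGreatest.csSup_eq ⟨Set.mem_image_of_mem f ha, Set.forall_mem_image.2 hmax⟩

theorem setAverage_sub_nonpos_of_isMaxOn {X : Type*} [MeasurableSpace X] {μ : Measure X}
    {u : X → ℝ} {s t : Set X} {x : X} (hmax : IsMaxOn u s x) (ht : MeasurableSet t)
    (hts : t ⊆ s) : ⨍ y in t, (u y - u x) ∂μ ≤ 0 := by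
  have hint : ∫ y in t, (u y - u x) ∂μ ≤ 0 :=
    setIntegral_nonpos ht fun y hy => sub_nonpos.2 (hmax (hts hy))
  rw [setAverage_eq]
  exact smul_nonpos_of_nonneg_of_nonpos (by positivity) hint

theorem upperAMVLaplacian_nonpos_of_isMaxOn {X : Type*} [MetricSpace X] [MeasurableSpace X]
    [OpensMeasurableSpace X] {μ : Measure X} {s : Set X} {u : X → ℝ} {x : X}
    (hs : MeasurableSet s) (hmax : IsMaxOn u s x) : upperAMVLaplacian μ s u x ≤ 0 :=
  Real.limsup_nonpos_of_eventually_nonpos <| Eventually.of_forall fun r =>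
    mul_nonpos_of_nonneg_of_nonpos (by positivity)
      (setAverage_sub_nonpos_of_isMaxOn hmax (measurableSet_ball.inter hs) Set.inter_subset_right)

theorem maximum_principle_strictly_upper_amv_subharmonic_general
    {X : Type*} [MetricSpace X] [ProperSpace X] [MeasurableSpace X] [BorelSpace X]
    (μ : Measure X)
    (Ω : Set X) (hΩo : IsOpen Ω) (hΩne : Ω.Nonempty) (hΩb : Bornology.IsBounded Ω)
    (u : X → ℝ)
    (husc : UpperSemicontinuousOn u (closure Ω))
    (hsub : ∀ x ∈ Ω, 0 < Filter.limsup
      (fun r : ℝ => (1 / r ^ 2) * ⨍ y in Metric.ball x r ∩ closure Ω, (u y - u x) ∂μ)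
      (𝓝[>] (0 : ℝ))) :
    sSup (u '' frontier Ω) = sSup (u '' closure Ω) ∧
    ∀ x ∈ Ω, u x ≠ sSup (u '' closure Ω) := by
  have no_interior_max : ∀ x ∈ Ω, ¬IsMaxOn u (closure Ω) x := fun x hx hmax =>
    (hsub x hx).not_ge (upperAMVLaplacian_nonpos_of_isMaxOn isClosed_closure.measurableSet hmax)
  obtain ⟨x₀, hx₀, hmax⟩ := husc.exists_isMaxOn hΩne.closure
    (isCompact_of_isClosed_isBounded isClosed_closure hΩb.closure)
  have hx₀_frontier : x₀ ∈ frontier Ω := by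
    rw [hΩo.frontier_eq]
    exact ⟨hx₀, fun hx₀Ω => no_interior_max x₀ hx₀Ω hmax⟩
  rw [hmax.csSup_image_eq hx₀,
    (hmax.on_subset frontier_subset_closure).csSup_image_eq hx₀_frontier]
  exact ⟨rfl, fun x hx hx_eq =>
    no_interior_max x hx fun y hy => le_of_le_of_eq (hmax hy) hx_eq.symm⟩

/-- Maximum principle for strictly upper AMV subharmonic functions: on a proper
metric measure space, if `u` is u.s.c. on `Ω̄`, locally integrable on `Ω`, and its upper AMV
Laplacian is `> 0` on `Ω`, then `max_{∂Ω} u = max_{Ω̄} u` and `u` does not attain its maximum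
in `Ω`. -/
theorem maximum_principle_strictly_upper_amv_subharmonic
    {X : Type*} [MetricSpace X] [ProperSpace X] [MeasurableSpace X] [BorelSpace X]
    (μ : Measure X) [μ.IsOpenPosMeasure]
    (hfin : ∀ (x : X) (r : ℝ), μ (Metric.ball x r) < ⊤)
    (Ω : Set X) (hΩo : IsOpen Ω) (hΩne : Ω.Nonempty) (hΩb : Bornology.IsBounded Ω)
    (hfr : (frontier Ω).Nonempty)
    (u : X → ℝ)
    (husc : UpperSemicontinuousOn u (closure Ω))
    (hloc : LocallyIntegrableOn u Ω μ)
    (hsub : ∀ x ∈ Ω, 0 < Filter.limsup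
      (fun r : ℝ => (1 / r ^ 2) * ⨍ y in Metric.ball x r ∩ closure Ω, (u y - u x) ∂μ)
      (𝓝[>] (0 : ℝ))) :
    sSup (u '' frontier Ω) = sSup (u '' closure Ω) ∧
    ∀ x ∈ Ω, u x ≠ sSup (u '' closure Ω) :=
  maximum_principle_strictly_upper_amv_subharmonic_general μ Ω hΩo hΩne hΩb u husc hsub
end

section
/- On ℝ with the Euclidean distance and the Lebesgue measure L¹, let sgn denote the sign function with sgn 0 = 0, and define u(x) := sgn x − sgn(x−1) and Ω := (−1, 2). Then for every x ∈ Ω the AMV Laplacian exists and Δ_{L¹} u(x) = 0 (u is pointwise AMV harmonic in Ω), yet the maximum principle fails: u = 0 on ∂Ω = {−1, 2} while max_{Ω̄} u = 2 > 0 is attained at interior points. -/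
open MeasureTheory Metric Filter Topology Real

/-!
Near every point `x`, `u y - u x` is a constant multiple of `sign (y - x)`: away from `0` and `1`
the multiple is `0` because `u` is locally constant, and at the two jumps `u x` is the midpoint of
the one-sided values (`sign 0 = 0`). Since `sign (· - x)` is odd about `x`, its average over every
ball centred at `x` vanishes, so all scaled averages `Δ_r u x` are `0` for small `r`. The maximum
principle fails because `u = 2` on `(0, 1)` and `u = 0` at `-1` and `2`.
-/

theorem Real.sign_mem_Icc (r : ℝ) : sign r ∈ Set.Icc (-1 : ℝ) 1 := by
  rcases sign_apply_eq r with h | h | h <;> rw [h] <;> norm_num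

theorem intervalIntegral.integral_neg_self_eq_zero_of_odd {f : ℝ → ℝ}
    (hf : ∀ t, f (-t) = -f t) (r : ℝ) : ∫ t in -r..r, f t = 0 := by
  have h := intervalIntegral.integral_comp_neg (a := -r) (b := r) f
  simp only [hf, intervalIntegral.integral_neg, neg_neg] at h
  linarith

theorem integral_ball_sign_sub_eq_zero (x r : ℝ) : ∫ y in ball x r, sign (y - x) = 0 := by
  rcases le_or_gt r 0 with hr | hr
  · rw [ball_eq_empty.2 hr, Measure.restrict_empty, integral_zero_measure]
  rw [ball_eq_Ioo, ← integral_Ioc_eq_integral_Ioo, ← intervalIntegral.integral_of_le (by linarith),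
    intervalIntegral.integral_comp_sub_right (fun t => sign t), sub_sub_cancel_left,
    add_sub_cancel_left]
  exact intervalIntegral.integral_neg_self_eq_zero_of_odd (fun _ => sign_neg) r

theorem setAverage_ball_eq_zero_of_eqOn_sign {f : ℝ → ℝ} {x r c : ℝ}
    (h : Set.EqOn f (fun y => c * sign (y - x)) (ball x r)) : ⨍ y in ball x r, f y = 0 := by
  rw [setAverage_eq, setIntegral_congr_fun measurableSet_ball h, integral_const_mul,
    integral_ball_sign_sub_eq_zero, mul_zero, smul_zero]

def IsSignJumpAt (u : ℝ → ℝ) (x : ℝ) : Prop :=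
  ∃ c : ℝ, ∀ᶠ y in 𝓝 x, u y - u x = c * sign (y - x)

theorem isSignJumpAt_sign_sub (a x : ℝ) : IsSignJumpAt (fun y => sign (y - a)) x := by
  rcases lt_trichotomy x a with hx | rfl | hx
  · refine ⟨0, (eventually_lt_nhds hx).mono fun y hy => ?_⟩
    simp [sign_of_neg (sub_neg.2 hy), sign_of_neg (sub_neg.2 hx)]
  · exact ⟨1, Eventually.of_forall fun y => by simp⟩
  · refine ⟨0, (eventually_gt_nhds hx).mono fun y hy => ?_⟩
    simp [sign_of_pos (sub_pos.2 hy), sign_of_pos (sub_pos.2 hx)]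

theorem IsSignJumpAt.sub {u v : ℝ → ℝ} {x : ℝ} (hu : IsSignJumpAt u x) (hv : IsSignJumpAt v x) :
    IsSignJumpAt (fun y => u y - v y) x := by
  obtain ⟨c, hc⟩ := hu
  obtain ⟨d, hd⟩ := hv
  refine ⟨c - d, ?_⟩
  filter_upwards [hc, hd] with y hcy hdy
  linear_combination hcy - hdy

theorem IsSignJumpAt.tendsto_amvLaplacian_zero {u : ℝ → ℝ} {x : ℝ} (hu : IsSignJumpAt u x) :
    Tendsto (fun r : ℝ => (1 / r ^ 2) * ⨍ y in ball x r, (u y - u x) ∂volume)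
      (𝓝[>] 0) (𝓝 0) := by
  obtain ⟨c, hc⟩ := hu
  obtain ⟨ε, hε, hball⟩ := eventually_nhds_iff_ball.1 hc
  refine tendsto_const_nhds.congr' ?_
  filter_upwards [Ioo_mem_nhdsGT hε] with r hr
  rw [setAverage_ball_eq_zero_of_eqOn_sign fun y hy => hball y (ball_subset_ball hr.2.le hy),
    mul_zero]

/-- On `(ℝ, d_e, L¹)`, the function `u = sgn x − sgn(x−1)` is pointwise AMV
harmonic in `Ω = (−1, 2)`, yet the maximum principle fails: `u = 0` on `∂Ω = {−1, 2}` while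
`max_{Ω̄} u = 2 > 0` is attained at interior points. -/
theorem amv_harmonic_sign_violates_maximum_principle
    (u : ℝ → ℝ) (hu : u = fun x => Real.sign x - Real.sign (x - 1)) :
    (∀ x ∈ Set.Ioo (-1 : ℝ) 2, Filter.Tendsto
      (fun r : ℝ => (1 / r ^ 2) * ⨍ y in Metric.ball x r, (u y - u x) ∂volume)
      (𝓝[>] (0 : ℝ)) (𝓝 0)) ∧
    (∀ x ∈ ({-1, 2} : Set ℝ), u x = 0) ∧
    (frontier (Set.Ioo (-1 : ℝ) 2) = {-1, 2}) ∧
    (∀ y ∈ Set.Icc (-1 : ℝ) 2, u y ≤ 2) ∧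
    (∃ x ∈ Set.Ioo (-1 : ℝ) 2, u x = 2) := by
  refine ⟨fun x _ => ?_, ?_, frontier_Ioo (by norm_num), fun y _ => ?_, ⟨1 / 2, ?_, ?_⟩⟩
  · have hjump : IsSignJumpAt u x := by
      rw [hu]
      simpa using (isSignJumpAt_sign_sub 0 x).sub (isSignJumpAt_sign_sub 1 x)
    exact hjump.tendsto_amvLaplacian_zero
  · rintro x (rfl | rfl) <;> norm_num [hu, sign_of_neg, sign_of_pos]
  · obtain ⟨-, hy⟩ := sign_mem_Icc y
    obtain ⟨hy', -⟩ := sign_mem_Icc (y - 1)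
    rw [hu]
    linarith
  · norm_num
  · norm_num [hu, sign_of_neg, sign_of_pos]
end

section
/- Let (X,d,μ) be a metric measure space with μ(B_r(x)) positive and finite for every ball, fix r > 0, and set w(x) := ∫_{B_r(x)} dμ(y)/μ(B_r(y)) and (T_r u)(x) := ⨍_{B_r(x)} u dμ. Then for every 1 ≤ p ≤ ∞: if u ∈ L^p(X, w μ), then T_r u ∈ L^p(X, μ) and ‖T_r u‖_{L^p(X,μ)} ≤ ‖u‖_{L^p(X, w μ)}. -/
open MeasureTheory Metric Filter
open scoped ENNReal NNReal

/-!
Jensen's inequality on each ball gives `‖T_r u x‖ₑ ^ p ≤ ⨍⁻_{B_r(x)} ‖u‖ₑ ^ p`. Integrating in `x`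
and exchanging the order of integration (`y ∈ B_r(x) ↔ x ∈ B_r(y)`) turns the right-hand side
into `∫ ‖u‖ₑ ^ p w dμ`. For `p = ∞`, an average never exceeds the essential supremum, and `μ` and
`w μ` have the same null sets because `w > 0`.

Tonelli needs the relation `d(x, y) < r` to be measurable in `X × X`. This holds because `X` is
separable: for a σ-finite measure charging every ball, every `ε`-separated set is countable.
-/

namespace MeasureTheory

variable {α : Type*} [MeasurableSpace α] {μ : Measure α}

theorem enorm_average_le_laverage_enorm {E : Type*} [NormedAddCommGroup E] [NormedSpace ℝ E]
    (f : α → E) : ‖⨍ x, f x ∂μ‖ₑ ≤ ⨍⁻ x, ‖f x‖ₑ ∂μ :=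
  enorm_integral_le_lintegral_enorm f

theorem rpow_laverage_le_laverage_rpow {f : α → ℝ≥0∞} (hf : AEMeasurable f μ) {q : ℝ}
    (hq : 1 ≤ q) : (⨍⁻ x, f x ∂μ) ^ q ≤ ⨍⁻ x, f x ^ q ∂μ := by
  have hq₀ : 0 < q := zero_lt_one.trans_le hq
  rcases eq_or_ne μ 0 with rfl | hμ
  · simp [ENNReal.zero_rpow_of_pos hq₀]
  by_cases hμ_fin : IsFiniteMeasure μ
  swap
  · -- `(μ univ)⁻¹ = 0`, so both averages are integrals against the zero measure.
    simp [laverage, not_isFiniteMeasure_iff.mp hμ_fin, ENNReal.zero_rpow_of_pos hq₀]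
  have : NeZero μ := ⟨hμ⟩
  -- On the probability measure `(μ univ)⁻¹ • μ`, the `L¹` norm is at most the `L^q` norm.
  have h := eLpNorm'_le_eLpNorm'_of_exponent_le zero_lt_one hq ((μ Set.univ)⁻¹ • μ)
    (hf.smul_measure _).aestronglyMeasurable
  simp only [eLpNorm', enorm_eq_self, ENNReal.rpow_one, div_one] at h
  rw [laverage_eq', laverage_eq']
  calc (∫⁻ x, f x ∂(μ Set.univ)⁻¹ • μ) ^ q
      ≤ ((∫⁻ x, f x ^ q ∂(μ Set.univ)⁻¹ • μ) ^ (1 / q)) ^ q := by gcongr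
    _ = ∫⁻ x, f x ^ q ∂(μ Set.univ)⁻¹ • μ := by
      rw [← ENNReal.rpow_mul, one_div_mul_cancel hq₀.ne', ENNReal.rpow_one]

theorem eLpNorm_top_setAverage_le {β E : Type*} [MeasurableSpace β] [NormedAddCommGroup E]
    [NormedSpace ℝ E] (ν : Measure β) (s : β → Set α) (u : α → E) :
    eLpNorm (fun x => ⨍ y in s x, u y ∂μ) ∞ ν ≤ eLpNorm u ∞ μ := by
  rw [eLpNorm_exponent_top, eLpNorm_exponent_top]
  refine essSup_le_of_ae_le _ (Eventually.of_forall fun x => ?_)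
  exact (enorm_average_le_laverage_enorm _).trans (setLAverage_le_essSup _ _)

end MeasureTheory

section BallsOfPositiveMeasure

variable {X : Type*} [PseudoMetricSpace X] [MeasurableSpace X] [OpensMeasurableSpace X]
  {μ : Measure X}

theorem Metric.IsSeparated.countable_of_measure_ball_pos [SFinite μ] {ε : ℝ≥0} {s : Set X}
    (hs : IsSeparated (ε : ℝ≥0∞) s) (hpos : ∀ x ∈ s, 0 < μ (ball x (ε / 2))) : s.Countable := by
  have hdisj : Pairwise (Function.onFun Disjoint fun x : s => ball (x : X) (ε / 2)) := by
    intro x y hxy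
    refine ball_disjoint_ball ?_
    have hxy : (ε : ℝ≥0∞) < edist (x : X) y := hs x.2 y.2 (Subtype.coe_ne_coe.mpr hxy)
    rw [edist_dist, ← ENNReal.ofReal_coe_nnreal,
      ENNReal.ofReal_lt_ofReal_iff_of_nonneg ε.coe_nonneg] at hxy
    linarith
  have hcount := Measure.countable_meas_pos_of_disjoint_iUnion (μ := μ)
    (fun _ => measurableSet_ball) hdisj
  rw [show {x : s | 0 < μ (ball x (ε / 2))} = Set.univ from
    Set.eq_univ_of_forall fun x => hpos x x.2] at hcount
  exact Set.countable_coe_iff.mp (Set.countable_univ_iff.mp hcount)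

theorem secondCountableTopology_of_measure_ball_pos [SFinite μ]
    (hpos : ∀ (x : X) (ε : ℝ), 0 < ε → 0 < μ (ball x ε)) : SecondCountableTopology X := by
  refine secondCountable_of_almost_dense_set fun ε hε => ?_
  lift ε to ℝ≥0 using hε.le
  obtain ⟨N, hN⟩ := zorn_subset {N : Set X | IsSeparated (ε : ℝ≥0∞) N} fun c hc hchain =>
    ⟨⋃₀ c, (Set.pairwise_sUnion hchain.directedOn).2 hc, fun _ => Set.subset_sUnion_of_mem⟩
  have hcover : IsCover ε Set.univ N := .of_maximal_isSeparated (by simpa using hN)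
  refine ⟨N, hN.prop.countable_of_measure_ball_pos fun x _ => hpos x _ (by positivity),
    fun x => ?_⟩
  obtain ⟨y, hy, hxy⟩ := hcover (Set.mem_univ x)
  exact ⟨y, hy, by simpa [edist_dist] using hxy⟩

end BallsOfPositiveMeasure

theorem sigmaFinite_of_measure_ball_lt_top {X : Type*} [PseudoMetricSpace X] [MeasurableSpace X]
    {μ : Measure X} (hfin : ∀ (x : X) (r : ℝ), μ (ball x r) < ∞) : SigmaFinite μ := by
  rcases isEmpty_or_nonempty X with hX | ⟨⟨x₀⟩⟩
  · rw [Measure.eq_zero_of_isEmpty μ]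
    infer_instance
  · exact ⟨⟨⟨fun n => ball x₀ n, fun _ => trivial, fun n => hfin x₀ n, iUnion_ball_nat x₀⟩⟩⟩

section BallAverage

variable {X E : Type*} [PseudoMetricSpace X] [MeasurableSpace X] [NormedAddCommGroup E]
  [NormedSpace ℝ E]

noncomputable def ballAverage (μ : Measure X) (r : ℝ) (u : X → E) (x : X) : E :=
  ⨍ y in ball x r, u y ∂μ

noncomputable def ballWeight (μ : Measure X) (r : ℝ) (x : X) : ℝ≥0∞ :=
  ∫⁻ y in ball x r, (μ (ball y r))⁻¹ ∂μ

variable [OpensMeasurableSpace X]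

theorem measurableSet_dist_lt [SecondCountableTopology X] (r : ℝ) :
    MeasurableSet {p : X × X | dist p.2 p.1 < r} :=
  measurableSet_lt (measurable_snd.dist measurable_fst) measurable_const

variable {μ : Measure X} {r : ℝ}

theorem setLIntegral_ball_eq_lintegral_indicator (f : X × X → ℝ≥0∞) (x : X) :
    ∫⁻ y in ball x r, f (x, y) ∂μ
      = ∫⁻ y, {p : X × X | dist p.2 p.1 < r}.indicator f (x, y) ∂μ := by
  rw [← lintegral_indicator measurableSet_ball]
  rfl

theorem setIntegral_ball_eq_integral_indicator (f : X × X → E) (x : X) :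
    ∫ y in ball x r, f (x, y) ∂μ
      = ∫ y, {p : X × X | dist p.2 p.1 < r}.indicator f (x, y) ∂μ := by
  rw [← integral_indicator measurableSet_ball]
  rfl

variable [SecondCountableTopology X] [SFinite μ]

theorem measurable_measure_ball : Measurable fun x => μ (ball x r) :=
  measurable_measure_prodMk_left (measurableSet_dist_lt r)

theorem Measurable.setLIntegral_ball {f : X × X → ℝ≥0∞} (hf : Measurable f) :
    Measurable fun x => ∫⁻ y in ball x r, f (x, y) ∂μ := by
  simp_rw [setLIntegral_ball_eq_lintegral_indicator]
  exact (hf.indicator (measurableSet_dist_lt r)).lintegral_prod_right'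

theorem lintegral_setLIntegral_ball_comm {f : X × X → ℝ≥0∞} (hf : Measurable f) :
    ∫⁻ x, ∫⁻ y in ball x r, f (x, y) ∂μ ∂μ = ∫⁻ y, ∫⁻ x in ball y r, f (x, y) ∂μ ∂μ := by
  simp_rw [setLIntegral_ball_eq_lintegral_indicator]
  rw [lintegral_lintegral_swap (f := fun x y => {p : X × X | dist p.2 p.1 < r}.indicator f (x, y))
    (hf.indicator (measurableSet_dist_lt r)).aemeasurable]
  refine lintegral_congr fun y => ?_
  rw [← lintegral_indicator measurableSet_ball]
  congr 1 with x
  classical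
  simp only [Set.indicator_apply, Set.mem_ofPred_eq, mem_ball, dist_comm]

theorem MeasureTheory.AEStronglyMeasurable.stronglyMeasurable_ballAverage {u : X → E}
    (hu : AEStronglyMeasurable u μ) : StronglyMeasurable (ballAverage μ r u) := by
  have heq : ballAverage μ r u = ballAverage μ r (hu.mk u) :=
    funext fun x => average_congr (ae_restrict_of_ae hu.ae_eq_mk)
  have hint : ∀ x, ∫ y in ball x r, hu.mk u y ∂μ
      = ∫ y, {p : X × X | dist p.2 p.1 < r}.indicator (fun p => hu.mk u p.2) (x, y) ∂μ :=
    fun x => setIntegral_ball_eq_integral_indicator (fun p => hu.mk u p.2) x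
  rw [heq]
  unfold ballAverage
  simp_rw [setAverage_eq, measureReal_def, hint]
  exact measurable_measure_ball.ennreal_toReal.inv.stronglyMeasurable.smul
    ((hu.stronglyMeasurable_mk.comp_measurable measurable_snd).indicator
      (measurableSet_dist_lt r)).integral_prod_right'

theorem measurable_ballWeight : Measurable (ballWeight μ r) :=
  (measurable_measure_ball.inv.comp measurable_snd).setLIntegral_ball

theorem lintegral_setLAverage_ball_eq_lintegral_withDensity {f : X → ℝ≥0∞}
    (hf : AEMeasurable f μ) :
    ∫⁻ x, ⨍⁻ y in ball x r, f y ∂μ ∂μ = ∫⁻ y, f y ∂μ.withDensity (ballWeight μ r) := by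
  set g := hf.mk f
  have hg : Measurable g := hf.measurable_mk
  have hinv : Measurable fun x => (μ (ball x r))⁻¹ := measurable_measure_ball.inv
  calc ∫⁻ x, ⨍⁻ y in ball x r, f y ∂μ ∂μ
      = ∫⁻ x, ∫⁻ y in ball x r, (μ (ball x r))⁻¹ * g y ∂μ ∂μ := by
        refine lintegral_congr fun x => ?_
        rw [laverage_congr (ae_restrict_of_ae hf.ae_eq_mk), setLAverage_eq,
          ENNReal.div_eq_inv_mul, lintegral_const_mul _ hg]
    _ = ∫⁻ y, ∫⁻ x in ball y r, (μ (ball x r))⁻¹ * g y ∂μ ∂μ :=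
        lintegral_setLIntegral_ball_comm ((hinv.comp measurable_fst).mul (hg.comp measurable_snd))
    _ = ∫⁻ y, ballWeight μ r y * g y ∂μ := by
        simp_rw [lintegral_mul_const _ hinv]
        rfl
    _ = ∫⁻ y, g y ∂μ.withDensity (ballWeight μ r) :=
        (lintegral_withDensity_eq_lintegral_mul _ measurable_ballWeight hg).symm
    _ = ∫⁻ y, f y ∂μ.withDensity (ballWeight μ r) :=
        lintegral_congr_ae ((withDensity_absolutelyContinuous μ _).ae_eq hf.ae_eq_mk).symm

theorem absolutelyContinuous_withDensity_ballWeight (h0 : ∀ x, μ (ball x r) ≠ 0)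
    (htop : ∀ x, μ (ball x r) ≠ ∞) : μ ≪ μ.withDensity (ballWeight μ r) := by
  refine withDensity_absolutelyContinuous' measurable_ballWeight.aemeasurable
    (Eventually.of_forall fun x => ?_)
  refine ((setLIntegral_pos_iff measurable_measure_ball.inv).2 ?_).ne'
  simpa [Function.support, htop] using (h0 x).bot_lt

theorem eLpNorm_ballAverage_le_of_ne_top {p : ℝ≥0∞} (hp : 1 ≤ p) (hp_top : p ≠ ∞) {u : X → E}
    (hu : AEStronglyMeasurable u μ) :
    eLpNorm (ballAverage μ r u) p μ ≤ eLpNorm u p (μ.withDensity (ballWeight μ r)) := by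
  have hp₀ : p ≠ 0 := (zero_lt_one.trans_le hp).ne'
  have hq : 1 ≤ p.toReal := by simpa using ENNReal.toReal_mono hp_top hp
  rw [eLpNorm_eq_lintegral_rpow_enorm_toReal hp₀ hp_top,
    eLpNorm_eq_lintegral_rpow_enorm_toReal hp₀ hp_top,
    ← lintegral_setLAverage_ball_eq_lintegral_withDensity (hu.enorm.pow_const _)]
  gcongr with x
  calc ‖ballAverage μ r u x‖ₑ ^ p.toReal ≤ (⨍⁻ y in ball x r, ‖u y‖ₑ ∂μ) ^ p.toReal := by
        gcongr
        exact enorm_average_le_laverage_enorm _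
    _ ≤ ⨍⁻ y in ball x r, ‖u y‖ₑ ^ p.toReal ∂μ :=
        rpow_laverage_le_laverage_rpow hu.enorm.restrict hq

theorem eLpNorm_ballAverage_le (hac : μ ≪ μ.withDensity (ballWeight μ r)) {p : ℝ≥0∞}
    (hp : 1 ≤ p) {u : X → E} (hu : AEStronglyMeasurable u μ) :
    eLpNorm (ballAverage μ r u) p μ ≤ eLpNorm u p (μ.withDensity (ballWeight μ r)) := by
  rcases eq_or_ne p ∞ with rfl | hp_top
  · refine (eLpNorm_top_setAverage_le μ _ u).trans ?_
    simp only [eLpNorm_exponent_top]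
    exact eLpNormEssSup_mono_measure u hac
  · exact eLpNorm_ballAverage_le_of_ne_top hp hp_top hu

end BallAverage

/-- For a metric measure space with balls of positive finite measure, `r > 0`,
`w(x) := ∫_{B_r(x)} dμ(y)/μ(B_r(y))` and `T_r u(x) := ⨍_{B_r(x)} u dμ`: for every `1 ≤ p ≤ ∞`,
if `u ∈ L^p(X, wμ)` then `T_r u ∈ L^p(X, μ)` with `‖T_r u‖_{L^p(μ)} ≤ ‖u‖_{L^p(wμ)}`. -/
theorem averaging_operator_Lp_bound
    {X : Type*} [MetricSpace X] [MeasurableSpace X] [BorelSpace X]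
    (μ : Measure X)
    (hpos : ∀ (x : X) (r : ℝ), 0 < r → 0 < μ (Metric.ball x r))
    (hfin : ∀ (x : X) (r : ℝ), μ (Metric.ball x r) < ⊤)
    (r : ℝ) (hr : 0 < r)
    (w : X → ℝ≥0∞)
    (hw : w = fun x => ∫⁻ y in Metric.ball x r, (μ (Metric.ball y r))⁻¹ ∂μ)
    (p : ℝ≥0∞) (hp : 1 ≤ p)
    (u : X → ℝ) (hu : MemLp u p (μ.withDensity w)) :
    MemLp (fun x => ⨍ y in Metric.ball x r, u y ∂μ) p μ ∧
    eLpNorm (fun x => ⨍ y in Metric.ball x r, u y ∂μ) p μ ≤ eLpNorm u p (μ.withDensity w) := by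
  subst hw
  have : SigmaFinite μ := sigmaFinite_of_measure_ball_lt_top hfin
  have : SecondCountableTopology X := secondCountableTopology_of_measure_ball_pos hpos
  have hac : μ ≪ μ.withDensity (ballWeight μ r) :=
    absolutelyContinuous_withDensity_ballWeight (fun x => (hpos x r hr).ne')
      (fun x => (hfin x r).ne)
  have hu_μ : AEStronglyMeasurable u μ := hu.1.mono_ac hac
  have hle := eLpNorm_ballAverage_le hac hp hu_μ
  exact ⟨⟨hu_μ.stronglyMeasurable_ballAverage.aestronglyMeasurable, hle.trans_lt hu.2⟩, hle⟩
end

section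
/- On ℝ with the Euclidean distance and Lebesgue measure L¹, let u(x) := sgn x (with sgn 0 = 0). Then for every φ ∈ C_c^∞(ℝ), lim_{r→0⁺} ∫_ℝ φ(x) Δ_{L¹,r} u(x) dx = −φ'(0)/3; that is, the weak AMV Laplacian of sgn is the distribution (2/6)δ', one sixth of the distributional Laplacian of sgn, even though the pointwise AMV Laplacian of sgn is 0 at every point of ℝ. -/
open MeasureTheory Metric Filter Topology Real
open scoped ENNReal

lemma msign : Measurable Real.sign := by
  have : Real.sign = fun r : ℝ => if r < 0 then (-1:ℝ) else if 0 < r then 1 else 0 := rfl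
  rw [this]
  exact Measurable.ite measurableSet_Iio measurable_const
    (Measurable.ite measurableSet_Ioi measurable_const measurable_const)

lemma abs_sign_le (x : ℝ) : |Real.sign x| ≤ 1 := by
  rcases Real.sign_apply_eq x with h | h | h <;> simp [h]

lemma intervalIntegrable_of_bound (f : ℝ → ℝ) (hf : Measurable f) (C : ℝ)
    (h : ∀ x, |f x| ≤ C) (a b : ℝ) : IntervalIntegrable f volume a b := by
  rw [intervalIntegrable_iff]
  refine (integrableOn_const ?_).mono' hf.aestronglyMeasurable.restrict
    (Eventually.of_forall fun x => h x)
  exact measure_Ioc_lt_top.ne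

lemma sign_intervalIntegrable (a b : ℝ) : IntervalIntegrable Real.sign volume a b :=
  intervalIntegrable_of_bound _ msign 1 abs_sign_le a b

lemma integral_sign_nonneg {a b : ℝ} (ha : 0 ≤ a) (hab : a ≤ b) :
    ∫ y in a..b, Real.sign y = b - a := by
  rw [intervalIntegral.integral_of_le hab,
    show ∫ y in Set.Ioc a b, Real.sign y = ∫ y in Set.Ioc a b, (1:ℝ) from
      setIntegral_congr_fun measurableSet_Ioc
        (fun y hy => Real.sign_of_pos (lt_of_le_of_lt ha hy.1))]
  simp [Real.volume_Ioc, ENNReal.toReal_ofReal (sub_nonneg.mpr hab), hab]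

lemma integral_sign_nonpos {a b : ℝ} (hb : b ≤ 0) (hab : a ≤ b) :
    ∫ y in a..b, Real.sign y = a - b := by
  rw [intervalIntegral.integral_of_le hab, integral_Ioc_eq_integral_Ioo,
    show ∫ y in Set.Ioo a b, Real.sign y = ∫ y in Set.Ioo a b, (-1:ℝ) from
      setIntegral_congr_fun measurableSet_Ioo
        (fun y hy => Real.sign_of_neg (lt_of_lt_of_le hy.2 hb))]
  simp [Real.volume_Ioo, ENNReal.toReal_ofReal (sub_nonneg.mpr hab)]; rw [max_eq_left (sub_nonneg.mpr hab)]; ring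

lemma integral_sign (a b : ℝ) (hab : a ≤ b) : ∫ y in a..b, Real.sign y = |b| - |a| := by
  rcases le_or_gt 0 a with ha | ha
  · rw [integral_sign_nonneg ha hab, abs_of_nonneg (le_trans ha hab), abs_of_nonneg ha]
  rcases le_or_gt b 0 with hb | hb
  · rw [integral_sign_nonpos hb hab, abs_of_nonpos hb, abs_of_nonpos ha.le]; ring
  · have h1 : ∫ y in a..0, Real.sign y = a - 0 := integral_sign_nonpos le_rfl ha.le
    have h2 : ∫ y in (0:ℝ)..b, Real.sign y = b - 0 := integral_sign_nonneg le_rfl hb.le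
    rw [← intervalIntegral.integral_add_adjacent_intervals (sign_intervalIntegrable a 0)
      (sign_intervalIntegrable 0 b), h1, h2, abs_of_pos hb, abs_of_neg ha]
    ring

lemma avg_formula {x r : ℝ} (hr : 0 < r) :
    (⨍ y in Metric.ball x r, (Real.sign y - Real.sign x) ∂volume)
      = (|x + r| - |x - r|) / (2 * r) - Real.sign x := by
  have hle : x - r ≤ x + r := by linarith
  have hint : IntegrableOn Real.sign (Set.Ioo (x - r) (x + r)) volume :=
    (sign_intervalIntegrable (x - r) (x + r)).1.mono_set Set.Ioo_subset_Ioc_self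
  have hI : ∫ y in Set.Ioo (x - r) (x + r), Real.sign y = |x + r| - |x - r| := by
    rw [← integral_Ioc_eq_integral_Ioo, ← intervalIntegral.integral_of_le hle,
      integral_sign _ _ hle]
  rw [setAverage_eq, Real.ball_eq_Ioo]
  rw [integral_sub hint (integrableOn_const
    (by rw [Real.volume_Ioo]; exact ENNReal.ofReal_ne_top))]
  rw [hI, setIntegral_const, Real.volume_real_Ioo]
  have h2 : x + r - (x - r) = 2 * r := by ring
  rw [h2, max_eq_left (by linarith : (0:ℝ) ≤ 2 * r)]
  simp only [smul_eq_mul]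
  field_simp

lemma sign_mul_pos {r : ℝ} (hr : 0 < r) (t : ℝ) : Real.sign (r * t) = Real.sign t := by
  rcases lt_trichotomy t 0 with h | h | h
  · rw [Real.sign_of_neg h, Real.sign_of_neg (mul_neg_of_pos_of_neg hr h)]
  · simp [h]
  · rw [Real.sign_of_pos h, Real.sign_of_pos (mul_pos hr h)]

lemma inner_eq_zero_of_ge {x r : ℝ} (hr : 0 < r) (h : r ≤ |x|) :
    (|x + r| - |x - r|) / (2 * r) - Real.sign x = 0 := by
  rcases le_abs.mp h with h1 | h1
  · have e1 : |x + r| = x + r := abs_of_nonneg (by linarith)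
    have e2 : |x - r| = x - r := abs_of_nonneg (by linarith)
    rw [e1, e2, Real.sign_of_pos (by linarith)]
    have : x + r - (x - r) = 2 * r := by ring
    rw [this, div_self (by positivity)]
    ring
  · have e1 : |x + r| = -(x + r) := abs_of_nonpos (by linarith)
    have e2 : |x - r| = -(x - r) := abs_of_nonpos (by linarith)
    rw [e1, e2, Real.sign_of_neg (by linarith)]
    have : -(x + r) - -(x - r) = -(2 * r) := by ring
    rw [this, neg_div, div_self (by positivity : (2:ℝ)*r ≠ 0)]
    ring

lemma inner_eq_of_mem {x r : ℝ} (hr : 0 < r) (h1 : -r ≤ x) (h2 : x ≤ r) :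
    (|x + r| - |x - r|) / (2 * r) - Real.sign x = x / r - Real.sign x := by
  have e1 : |x + r| = x + r := abs_of_nonneg (by linarith)
  have e2 : |x - r| = -(x - r) := abs_of_nonpos (by linarith)
  rw [e1, e2]
  congr 1
  rw [show x + r - -(x - r) = 2 * x by ring]
  rw [mul_div_mul_left x r two_ne_zero]

lemma step_eq (φ : ℝ → ℝ) (hφc : Continuous φ) {r : ℝ} (hr : 0 < r) :
    ∫ x, φ x * ((1 / r ^ 2) * ⨍ y in Metric.ball x r, (Real.sign y - Real.sign x) ∂volume)
      = ∫ t in (-1:ℝ)..1, ((φ (r * t) - φ 0) / r) * (t - Real.sign t) := by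
  simp only [avg_formula hr]
  rw [← setIntegral_eq_integral_of_forall_compl_eq_zero
    (s := Set.Ioo (-r) r) (f := fun x => φ x * (1 / r ^ 2 * ((|x + r| - |x - r|) / (2 * r) - Real.sign x)))
    (fun x hx => by
      have : r ≤ |x| := by
        rcases not_and_or.mp (Set.mem_Ioo.not.mp hx)  with h | h
        · exact le_abs.mpr (Or.inr (by push_neg at h; linarith))
        · exact le_abs.mpr (Or.inl (by push_neg at h; linarith))
      simp only [inner_eq_zero_of_ge hr this, mul_zero])]
  rw [setIntegral_congr_fun measurableSet_Ioo
    (g := fun x => φ x * (1 / r ^ 2 * (x / r - Real.sign x)))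
    (fun x hx => by rw [inner_eq_of_mem hr hx.1.le hx.2.le])]
  rw [← integral_Ioc_eq_integral_Ioo, ← intervalIntegral.integral_of_le (by linarith : -r ≤ r)]
  have hsub := intervalIntegral.smul_integral_comp_mul_left
    (a := (-1:ℝ)) (b := 1) (fun x => φ x * (1 / r ^ 2 * (x / r - Real.sign x))) r
  rw [show r * (-1:ℝ) = -r by ring, mul_one] at hsub
  rw [← hsub, ← intervalIntegral.integral_smul]
  rw [intervalIntegral.integral_congr (g := fun t => (φ (r * t) / r) * (t - Real.sign t))
    (fun t _ => by
      have hr' : r ≠ 0 := ne_of_gt hr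
      simp only [smul_eq_mul, sign_mul_pos hr]
      field_simp)]
  have hTS : IntervalIntegrable (fun t : ℝ => t - Real.sign t) volume (-1) 1 :=
    (continuous_id'.intervalIntegrable _ _).sub (sign_intervalIntegrable _ _)
  have h1 : IntervalIntegrable (fun t : ℝ => ((φ (r * t) - φ 0) / r) * (t - Real.sign t)) volume (-1) 1 :=
    hTS.continuousOn_mul (Continuous.continuousOn (by continuity))
  have h2 : IntervalIntegrable (fun t : ℝ => (φ 0 / r) * (t - Real.sign t)) volume (-1) 1 :=
    hTS.continuousOn_mul (Continuous.continuousOn continuous_const)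
  have hzero : ∫ t in (-1:ℝ)..1, (φ 0 / r) * (t - Real.sign t) = 0 := by
    rw [intervalIntegral.integral_const_mul, intervalIntegral.integral_sub
      (continuous_id'.intervalIntegrable _ _) (sign_intervalIntegrable _ _),
      integral_sign _ _ (by norm_num), integral_id]
    norm_num
  calc ∫ t in (-1:ℝ)..1, (φ (r * t) / r) * (t - Real.sign t)
      = ∫ t in (-1:ℝ)..1, (((φ (r * t) - φ 0) / r) * (t - Real.sign t)
          + (φ 0 / r) * (t - Real.sign t)) := by
        apply intervalIntegral.integral_congr
        intro t _
        ring
    _ = ∫ t in (-1:ℝ)..1, ((φ (r * t) - φ 0) / r) * (t - Real.sign t) := by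
        rw [intervalIntegral.integral_add h1 h2, hzero, add_zero]

lemma part2 (x : ℝ) : Tendsto
    (fun r : ℝ => (1 / r ^ 2) * ⨍ y in Metric.ball x r, (Real.sign y - Real.sign x) ∂volume)
    (𝓝[>] (0 : ℝ)) (𝓝 0) := by
  by_cases hx : x = 0
  · subst hx
    apply Tendsto.congr' _ tendsto_const_nhds
    filter_upwards [self_mem_nhdsWithin] with r hr
    have hr' : (0:ℝ) < r := hr
    rw [avg_formula hr']
    simp [abs_of_pos hr', abs_of_nonpos (by linarith : (0:ℝ) - r ≤ 0), Real.sign_zero]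
  · apply Tendsto.congr' _ tendsto_const_nhds
    filter_upwards [Ioo_mem_nhdsGT_of_mem ⟨le_rfl, abs_pos.mpr hx⟩] with r hr
    rw [avg_formula hr.1, inner_eq_zero_of_ge hr.1 hr.2.le, mul_zero]

lemma habs_id (t : ℝ) : t * Real.sign t = |t| := by
  rcases lt_trichotomy t 0 with h | h | h
  · rw [Real.sign_of_neg h, abs_of_neg h]; ring
  · simp [h]
  · rw [Real.sign_of_pos h, abs_of_pos h]; ring

lemma abs_integral : ∫ t in (-1:ℝ)..1, |t| = 1 := by
  rw [← intervalIntegral.integral_add_adjacent_intervals (a := (-1:ℝ)) (b := 0) (c := 1)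
    (continuous_abs.intervalIntegrable _ _) (continuous_abs.intervalIntegrable _ _)]
  rw [intervalIntegral.integral_congr (a := (-1:ℝ)) (b := 0) (g := fun t => -t)
    (fun t ht => by
      rw [Set.uIcc_of_le (by norm_num : (-1:ℝ) ≤ 0)] at ht
      exact abs_of_nonpos ht.2),
    intervalIntegral.integral_congr (a := (0:ℝ)) (b := 1) (g := fun t => t)
    (fun t ht => by
      rw [Set.uIcc_of_le (by norm_num : (0:ℝ) ≤ 1)] at ht
      exact abs_of_nonneg ht.1)]
  rw [intervalIntegral.integral_neg, integral_id, integral_id]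
  norm_num

lemma Lval (c : ℝ) : ∫ t in (-1:ℝ)..1, (c * t) * (t - Real.sign t) = -c / 3 := by
  rw [intervalIntegral.integral_congr (g := fun t => c * t ^ 2 - c * |t|)
    (fun t _ => by
      show c * t * (t - Real.sign t) = c * t ^ 2 - c * |t|
      rw [← habs_id t]; ring)]
  rw [intervalIntegral.integral_sub
    (f := fun t : ℝ => c * t ^ 2) (g := fun t : ℝ => c * |t|)
    ((continuous_const.mul (continuous_pow 2)).intervalIntegrable _ _)
    ((continuous_const.mul continuous_abs).intervalIntegrable _ _),
    intervalIntegral.integral_const_mul, intervalIntegral.integral_const_mul,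
    integral_pow, abs_integral]
  norm_num
  ring

lemma part1_tendsto (φ : ℝ → ℝ) (hφ : ContDiff ℝ (⊤ : ℕ∞) φ) (hφc : HasCompactSupport φ) :
    Tendsto (fun r : ℝ => ∫ t in (-1:ℝ)..1, ((φ (r * t) - φ 0) / r) * (t - Real.sign t))
      (𝓝[>] (0:ℝ)) (𝓝 (∫ t in (-1:ℝ)..1, (deriv φ 0 * t) * (t - Real.sign t))) := by
  obtain ⟨C, hC⟩ := (hφc.deriv).exists_bound_of_continuous (hφ.continuous_deriv (by simp))
  have hC0 : 0 ≤ C := le_trans (norm_nonneg _) (hC 0)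
  have hlip : ∀ a b : ℝ, |φ a - φ b| ≤ C * |a - b| := by
    intro a b
    have := (convex_univ (𝕜 := ℝ) (E := ℝ)).norm_image_sub_le_of_norm_deriv_le
      (f := φ) (fun x _ => (hφ.differentiable (by simp)) x)
      (fun x _ => hC x) (Set.mem_univ b) (Set.mem_univ a)
    simpa [Real.norm_eq_abs] using this
  apply intervalIntegral.tendsto_integral_filter_of_dominated_convergence
    (bound := fun _ => C * 2)
  · filter_upwards with r
    exact (((((hφ.continuous.comp (continuous_const.mul continuous_id)).sub
      continuous_const).div_const r).measurable).mul
      (measurable_id.sub msign)).aestronglyMeasurable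
  · filter_upwards [self_mem_nhdsWithin] with r hr
    refine Eventually.of_forall fun t ht => ?_
    have htt : |t| ≤ 1 := by
      rw [Set.uIoc_of_le (by norm_num : (-1:ℝ) ≤ 1)] at ht
      exact abs_le.mpr ⟨ht.1.le, ht.2⟩
    have hr0 : (0:ℝ) < |r| := abs_pos.mpr (ne_of_gt hr)
    have e1 : |(φ (r * t) - φ 0) / r| ≤ C := by
      rw [abs_div, div_le_iff₀ hr0]
      calc |φ (r * t) - φ 0| ≤ C * |r * t - 0| := hlip _ _
        _ = C * (|r| * |t|) := by rw [sub_zero, abs_mul]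
        _ ≤ C * (|r| * 1) := by
            apply mul_le_mul_of_nonneg_left _ hC0
            exact mul_le_mul_of_nonneg_left htt (abs_nonneg r)
        _ = C * |r| := by ring
    have e2 : |t - Real.sign t| ≤ 2 := by
      calc |t - Real.sign t| ≤ |t| + |Real.sign t| := abs_sub t _
        _ ≤ 2 := by have := abs_sign_le t; linarith
    rw [Real.norm_eq_abs, abs_mul]
    exact mul_le_mul e1 e2 (abs_nonneg _) hC0
  · exact intervalIntegrable_const
  · refine Eventually.of_forall fun t _ => ?_
    have hφd : HasDerivAt φ (deriv φ 0) ((0:ℝ) * t) := by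
      rw [zero_mul]; exact ((hφ.differentiable (by simp)) 0).hasDerivAt
    have hcomp : HasDerivAt (fun s : ℝ => φ (s * t)) (deriv φ 0 * t) 0 :=
      hφd.comp 0 (hasDerivAt_mul_const t)
    have hslope := hasDerivAt_iff_tendsto_slope.mp hcomp
    have hmono : (𝓝[>] (0:ℝ)) ≤ 𝓝[≠] (0:ℝ) :=
      nhdsWithin_mono 0 (fun x hx => ne_of_gt hx)
    have := (hslope.mono_left hmono).mul_const (t - Real.sign t)
    apply this.congr
    intro r
    rw [slope_def_field]
    simp [zero_mul, sub_zero]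


/-- On `(ℝ, d_e, L¹)` with `u = sgn` (and `sgn 0 = 0`), for every smooth
compactly supported test function `φ` one has
`lim_{r→0⁺} ∫ φ(x) Δ_{L¹,r} u(x) dx = −φ'(0)/3`, i.e. the weak AMV Laplacian of `sgn` is
`(2/6)δ'`, even though the pointwise AMV Laplacian of `sgn` is `0` at every point of `ℝ`. -/
theorem weak_amv_laplacian_of_sign
    (u : ℝ → ℝ) (hu : u = fun x => Real.sign x) :
    (∀ φ : ℝ → ℝ, ContDiff ℝ (⊤ : ℕ∞) φ → HasCompactSupport φ →
      Filter.Tendsto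
        (fun r : ℝ => ∫ x, φ x * ((1 / r ^ 2) * ⨍ y in Metric.ball x r, (u y - u x) ∂volume))
        (𝓝[>] (0 : ℝ)) (𝓝 (-(deriv φ 0) / 3))) ∧
    (∀ x : ℝ, Filter.Tendsto
      (fun r : ℝ => (1 / r ^ 2) * ⨍ y in Metric.ball x r, (u y - u x) ∂volume)
      (𝓝[>] (0 : ℝ)) (𝓝 0)) := by
  subst hu
  constructor
  · intro φ hφ hφc
    have key := part1_tendsto φ hφ hφc
    rw [Lval (deriv φ 0)] at key
    apply Tendsto.congr' _ key
    filter_upwards [self_mem_nhdsWithin] with r hr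
    exact (step_eq φ hφ.continuous hr).symm
  · intro x
    exact part2 x
end
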